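/- arXiv:0803.1639 — 7 statements merged into one kernel-verified Lean document; each statement's English description precedes it below -/
import Mathlib

section
/- Every infinite virtually cyclic group G either admits an epimorphism onto ℤ (and then G ≅ F ⋊ ℤ with F finite) or admits an epimorphism onto the infinite dihedral group D_∞ with finite kernel. -/
/-!
The normal core `N` of the cyclic subgroup is infinite cyclic, normal and of finite index, and each
element of `G` acts on `N ≅ ℤ` by `±1`. If the action is trivial, `N` is central and the transfer
`G → N`, `g ↦ g ^ [G : N]`, has finite kernel and infinite image, hence yields an epimorphism onto
`ℤ` with finite kernel; it splits because `ℤ` is free. Otherwise the centralizer `H` of `N` has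
index two, the transfer on `H` yields `q : H ↠ ℤ` with finite kernel, and any `t ∉ H` inverts `q`.
Sending `x ∈ H` to the rotation by `q x` and `t x` to the reflection `sr (q x)` is then an
epimorphism onto `D∞` whose kernel is that of `q`.
-/

open Subgroup

theorem Subgroup.finite_of_inf_eq_bot {G : Type*} [Group G] {N : Subgroup G} [N.FiniteIndex]
    (K : Subgroup G) (h : N ⊓ K = ⊥) : Finite K := by
  have := N.isFiniteRelIndex_of_finiteIndex (K := K)
  apply Nat.finite_of_card_ne_zero
  rw [← relIndex_bot_left, ← h, inf_relIndex_right]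
  exact relIndex_ne_zero

theorem Subgroup.infinite_of_finiteIndex {G : Type*} [Group G] [Infinite G] (H : Subgroup G)
    [H.FiniteIndex] : Infinite H := by
  refine not_finite_iff_infinite.mp fun h => ?_
  have := H.finite_iff_finite_and_finiteIndex.mpr ⟨h, ‹_›⟩
  exact not_finite G

theorem IsCyclic.eq_id_or_eq_inv_of_mulEquiv {A : Type*} [Group A] [IsCyclic A] [Infinite A]
    (σ : A ≃* A) : (∀ a, σ a = a) ∨ (∀ a, σ a = a⁻¹) := by
  obtain ⟨m, hm⟩ := MonoidHom.map_cyclic σ.toMonoidHom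
  obtain ⟨m', hm'⟩ := MonoidHom.map_cyclic σ.symm.toMonoidHom
  obtain ⟨g, hgen⟩ := isCyclic_iff_exists_zpowers_eq_top.mp ‹IsCyclic A›
  have hg : ¬ IsOfFinOrder g := by
    rw [← infinite_zpowers, hgen, coe_top]
    exact Set.infinite_univ
  have hmm' : m * m' = 1 := by
    apply injective_zpow_iff_not_isOfFinOrder.mpr hg
    simp only [MulEquiv.coe_toMonoidHom] at hm hm'
    show g ^ (m * m') = g ^ (1 : ℤ)
    rw [zpow_one, zpow_mul, ← hm, ← hm', MulEquiv.symm_apply_apply]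
  rcases Int.eq_one_or_neg_one_of_mul_eq_one hmm' with rfl | rfl
  · left; simpa using hm
  · right; simpa using hm

theorem MonoidHom.exists_surjective_int_ker_eq {G : Type*} [Group G] (f : G →* Multiplicative ℤ)
    (hf : f ≠ 1) : ∃ f' : G →* Multiplicative ℤ, Function.Surjective f' ∧ f'.ker = f.ker := by
  obtain ⟨x, hx⟩ := DFunLike.ne_iff.mp hf
  have : Infinite f.range := by
    refine Set.infinite_coe_iff.mpr (Set.Infinite.mono ?_ (infinite_zpowers.mpr
      (not_isOfFinOrder_of_isMulTorsionFree hx)))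
    exact (zpowers_le.mpr (f.mem_range.mpr ⟨x, rfl⟩) :)
  let e : f.range ≃* Multiplicative ℤ := intCyclicMulEquiv.symm
  refine ⟨(e : f.range →* Multiplicative ℤ).comp f.rangeRestrict,
    e.surjective.comp f.rangeRestrict_surjective, ?_⟩
  rw [MonoidHom.ker_mulEquiv_comp, ker_rangeRestrict]

theorem exists_normal_isCyclic_infinite_finiteIndex {G : Type*} [Group G] [Infinite G]
    (C : Subgroup G) [IsCyclic C] [C.FiniteIndex] :
    ∃ N : Subgroup G, N.Normal ∧ IsCyclic N ∧ Infinite N ∧ N.FiniteIndex := by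
  have : IsCyclic C.normalCore :=
    isCyclic_of_surjective _ (subgroupOfEquivOfLe C.normalCore_le).surjective
  exact ⟨C.normalCore, C.normalCore_normal, this, C.normalCore.infinite_of_finiteIndex,
    inferInstance⟩

theorem exists_surjective_int_finite_ker_of_le_center {G : Type*} [Group G] {N : Subgroup G}
    (hN : N ≤ center G) [N.FiniteIndex] [IsCyclic N] [Infinite N] :
    ∃ q : G →* Multiplicative ℤ, Function.Surjective q ∧ Finite q.ker := by
  let e : N ≃* Multiplicative ℤ := intCyclicMulEquiv.symm
  have he (n : N) : (e : N →* Multiplicative ℤ).transfer n = e n ^ N.index := by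
    rw [MonoidHom.transfer_eq_pow _ _ fun _ _ hk => by
      rw [← mul_right_inj, ← (hN hk).comm, mul_inv_cancel_right], ← map_pow]
    rfl
  have hdisj : N ⊓ (e : N →* Multiplicative ℤ).transfer.ker = ⊥ := by
    refine eq_bot_iff.mpr fun n hn => ?_
    obtain ⟨hnN, hn⟩ := mem_inf.mp hn
    rw [MonoidHom.mem_ker, he ⟨n, hnN⟩, pow_eq_one_iff_left FiniteIndex.index_ne_zero,
      MulEquiv.map_eq_one_iff] at hn
    simpa using congrArg Subtype.val hn
  have hne : (e : N →* Multiplicative ℤ).transfer ≠ 1 := by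
    obtain ⟨n, hn⟩ := exists_ne (1 : N)
    refine DFunLike.ne_iff.mpr ⟨(n : G), fun h => hn (Subtype.ext ?_)⟩
    exact mem_bot.mp (hdisj ▸ mem_inf.mpr ⟨n.2, h⟩)
  obtain ⟨q, hq, hqker⟩ := MonoidHom.exists_surjective_int_ker_eq _ hne
  exact ⟨q, hq, hqker ▸ finite_of_inf_eq_bot _ hdisj⟩

theorem MonoidHom.exists_mulEquiv_semidirectProduct_of_rightInverse {G Q : Type*} [Group G]
    [Group Q] (f : G →* Q) (s : Q →* G) (hs : Function.RightInverse s f) :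
    ∃ φ : Q →* MulAut f.ker, Nonempty (G ≃* f.ker ⋊[φ] Q) := by
  let S : GroupExtension f.ker G Q :=
    ⟨f.ker.subtype, f, f.ker.subtype_injective, f.ker.range_subtype, hs.surjective⟩
  let σ : S.Splitting := ⟨s, hs⟩
  exact ⟨σ.conjAct, ⟨σ.semidirectProductMulEquiv.symm⟩⟩

theorem MonoidHom.exists_mulEquiv_semidirectProduct_int {G : Type*} [Group G]
    (f : G →* Multiplicative ℤ) (hf : Function.Surjective f) :
    ∃ φ : Multiplicative ℤ →* MulAut f.ker, Nonempty (G ≃* f.ker ⋊[φ] Multiplicative ℤ) := by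
  obtain ⟨g, hg⟩ := hf (.ofAdd 1)
  refine f.exists_mulEquiv_semidirectProduct_of_rightInverse (zpowersHom G g) fun z => ?_
  simp [hg, ← ofAdd_zsmul]

theorem MonoidHom.map_conj_eq_inv_of_conj_eq_inv {G A : Type*} [Group G] [CommGroup A]
    [IsMulTorsionFree A] {N H : Subgroup G} [N.Normal] [N.FiniteIndex] (q : H →* A) {t : G}
    (ht : ∀ n ∈ N, t⁻¹ * n * t = n⁻¹) (x : H) (hx : t⁻¹ * x * t ∈ H) :
    q ⟨t⁻¹ * x * t, hx⟩ = (q x)⁻¹ := by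
  -- `x ^ [G : N]` lies in `N`, where `t` acts by inversion, and `A` is torsion-free.
  have key : (⟨t⁻¹ * x * t, hx⟩ : H) ^ N.index = x⁻¹ ^ N.index := by
    ext
    have := map_pow (MulAut.conj t⁻¹) (x : G) N.index
    simp only [MulAut.conj_apply, inv_inv] at this
    simp [← this, ht _ (N.pow_index_mem (x : G))]
  rw [← pow_left_inj (FiniteIndex.index_ne_zero : N.index ≠ 0), ← map_pow, key, map_pow, map_inv]

section Dihedral

variable {G : Type*} [Group G] {H : Subgroup G} (q : H →* Multiplicative ℤ)

open Classical in
noncomputable def MonoidHom.extendToInt (x : G) : ℤ :=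
  if h : x ∈ H then (q ⟨x, h⟩).toAdd else 0

theorem MonoidHom.extendToInt_of_mem {x : G} (h : x ∈ H) : q.extendToInt x = (q ⟨x, h⟩).toAdd :=
  dif_pos h

theorem MonoidHom.extendToInt_mul {x y : G} (hx : x ∈ H) (hy : y ∈ H) :
    q.extendToInt (x * y) = q.extendToInt x + q.extendToInt y := by
  rw [q.extendToInt_of_mem hx, q.extendToInt_of_mem hy, q.extendToInt_of_mem (mul_mem hx hy),
    ← toAdd_mul, ← map_mul]
  rfl

-- `DihedralGroup 0` is indexed by `ZMod 0`, which is `ℤ` only up to unfolding: hence the casts.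
open Classical in
noncomputable def MonoidHom.toDihedral (t x : G) : DihedralGroup 0 :=
  if x ∈ H then .r (Int.cast (q.extendToInt x)) else .sr (Int.cast (q.extendToInt (t⁻¹ * x)))

variable {q} (hH : H.index = 2) {t : G}
  (hconj : ∀ x : H, ∀ hx : t⁻¹ * x * t ∈ H, q ⟨t⁻¹ * x * t, hx⟩ = (q x)⁻¹)
include hH hconj

theorem MonoidHom.extendToInt_conj {x : G} (hx : x ∈ H) :
    q.extendToInt (t⁻¹ * x * t) = -q.extendToInt x := by
  have hx' : t⁻¹ * x * t ∈ H := (normal_of_index_eq_two hH).conj_mem' x hx t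
  rw [q.extendToInt_of_mem hx, q.extendToInt_of_mem hx', hconj ⟨x, hx⟩, toAdd_inv]

theorem MonoidHom.extendToInt_mul_self (htt : t * t ∈ H) : q.extendToInt (t * t) = 0 := by
  have := extendToInt_conj hH hconj htt
  rw [show t⁻¹ * (t * t) * t = t * t by group] at this
  omega

theorem MonoidHom.toDihedral_mul (ht : t ∉ H) (x y : G) :
    q.toDihedral t (x * y) = q.toDihedral t x * q.toDihedral t y := by
  have hmul {a b : G} : a * b ∈ H ↔ (a ∈ H ↔ b ∈ H) := mul_mem_iff_of_index_two hH
  have hconj_mem {x : G} (hx : x ∈ H) : t⁻¹ * x * t ∈ H :=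
    (normal_of_index_eq_two hH).conj_mem' x hx t
  have htt : t * t ∈ H := hmul.mpr (iff_of_false ht ht)
  have ht_inv_mul {x : G} (hx : x ∉ H) : t⁻¹ * x ∈ H :=
    hmul.mpr (iff_of_false (by simpa using ht) hx)
  unfold MonoidHom.toDihedral
  by_cases hx : x ∈ H <;> by_cases hy : y ∈ H <;>
    simp only [hx, hy, hmul, if_true, if_false, iff_true, iff_false, not_true]
  · rw [DihedralGroup.r_mul_r, q.extendToInt_mul hx hy, Int.cast_add]
  · rw [DihedralGroup.r_mul_sr, show t⁻¹ * (x * y) = t⁻¹ * x * t * (t⁻¹ * y) by group,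
      q.extendToInt_mul (hconj_mem hx) (ht_inv_mul hy), extendToInt_conj hH hconj hx,
      Int.cast_add, Int.cast_neg, neg_add_eq_sub]
  · rw [DihedralGroup.sr_mul_r, ← mul_assoc, q.extendToInt_mul (ht_inv_mul hx) hy, Int.cast_add]
  · rw [DihedralGroup.sr_mul_sr, show x * y = t * t * (t⁻¹ * (t⁻¹ * x) * t) * (t⁻¹ * y) by group,
      q.extendToInt_mul (mul_mem htt (hconj_mem (ht_inv_mul hx))) (ht_inv_mul hy),
      q.extendToInt_mul htt (hconj_mem (ht_inv_mul hx)), extendToInt_mul_self hH hconj htt,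
      extendToInt_conj hH hconj (ht_inv_mul hx)]
    push_cast
    rw [zero_add, neg_add_eq_sub]

theorem exists_surjective_dihedralGroup_finite_ker_of_index_eq_two (hq : Function.Surjective q)
    [Finite q.ker] (ht : t ∉ H) :
    ∃ f : G →* DihedralGroup 0, Function.Surjective f ∧ Finite f.ker := by
  let f : G →* DihedralGroup 0 := .mk' (q.toDihedral t) (q.toDihedral_mul hH hconj ht)
  have hf (x : G) : f x = q.toDihedral t x := rfl
  refine ⟨f, ?_, ?_⟩
  · rintro (i | i) <;> obtain ⟨i, rfl⟩ := ZMod.intCast_surjective i <;>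
      obtain ⟨x, hx⟩ := hq (.ofAdd i)
    · refine ⟨x, ?_⟩
      simp [hf, MonoidHom.toDihedral, q.extendToInt_of_mem x.2, hx]
    · have htx : t * x ∉ H := fun h => ht (by simpa using mul_mem h (inv_mem x.2))
      refine ⟨t * x, ?_⟩
      simp [hf, MonoidHom.toDihedral, htx, q.extendToInt_of_mem x.2, hx]
  · have hle : f.ker ≤ H := fun x hx => by
      by_contra h
      rw [MonoidHom.mem_ker, hf, MonoidHom.toDihedral, if_neg h, ← DihedralGroup.r_zero] at hx
      cases hx
    have hker : f.ker.subgroupOf H ≤ q.ker := fun x hx => by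
      rw [mem_subgroupOf, MonoidHom.mem_ker, hf, MonoidHom.toDihedral, if_pos x.2,
        ← DihedralGroup.r_zero, q.extendToInt_of_mem x.2] at hx
      have h0 : ((q x).toAdd : ZMod 0) = 0 := by injection hx
      rw [MonoidHom.mem_ker, ← toAdd_eq_zero]
      exact_mod_cast h0
    have : Finite (f.ker.subgroupOf H) := Finite.of_injective _ (inclusion_injective hker)
    exact Finite.of_equiv _ (subgroupOfEquivOfLe hle).toEquiv

end Dihedral

section
variable {G : Type*} [Group G] {N : Subgroup G}

theorem Subgroup.mem_centralizer_iff_inv_mul_mul_eq {g : G} :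
    g ∈ centralizer (N : Set G) ↔ ∀ n ∈ N, g⁻¹ * n * g = n := by
  simp only [mem_centralizer_iff, SetLike.mem_coe, mul_assoc, inv_mul_eq_iff_eq_mul,
    eq_comm (b := g * _)]

variable [N.Normal] [IsCyclic N] [Infinite N]

theorem Subgroup.mem_centralizer_or_inv_mul_mul_eq_inv (g : G) :
    g ∈ centralizer (N : Set G) ∨ ∀ n ∈ N, g⁻¹ * n * g = n⁻¹ := by
  rw [mem_centralizer_iff_inv_mul_mul_eq]
  refine (IsCyclic.eq_id_or_eq_inv_of_mulEquiv (MulAut.conjNormal g⁻¹ : N ≃* N)).imp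
    (fun h n hn => ?_) (fun h n hn => ?_)
  · simpa using congrArg Subtype.val (h ⟨n, hn⟩)
  · simpa using congrArg Subtype.val (h ⟨n, hn⟩)

theorem Subgroup.index_centralizer_eq_two {t : G} (ht : t ∉ centralizer (N : Set G)) :
    (centralizer (N : Set G)).index = 2 := by
  have ht' := (mem_centralizer_or_inv_mul_mul_eq_inv t).resolve_left ht
  refine index_eq_two_iff_exists_notMem_and.mpr ⟨t, ht, fun g => ?_⟩
  refine (mem_centralizer_or_inv_mul_mul_eq_inv g).symm.imp_left fun hg => ?_
  rw [mem_centralizer_iff_inv_mul_mul_eq]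
  intro n hn
  calc (g * t)⁻¹ * n * (g * t) = t⁻¹ * (g⁻¹ * n * g) * t := by group
    _ = n := by rw [hg n hn, ht' _ (inv_mem hn), inv_inv]

end

theorem exists_surjective_dihedralGroup_finite_ker_of_not_le_center {G : Type*} [Group G]
    {N : Subgroup G} [N.Normal] [N.FiniteIndex] [IsCyclic N] [Infinite N]
    (hN : ¬ N ≤ center G) :
    ∃ f : G →* DihedralGroup 0, Function.Surjective f ∧ Finite f.ker := by
  obtain ⟨t, ht⟩ : ∃ t, t ∉ centralizer (N : Set G) := by
    by_contra! h
    exact hN fun n hn => mem_center_iff.mpr fun g => (mem_centralizer_iff.mp (h g) n hn).symm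
  have hNH : N ≤ centralizer (N : Set G) := fun n hn => mem_centralizer_iff.mpr fun m hm =>
    congrArg Subtype.val (IsMulCommutative.is_comm.comm (⟨m, hm⟩ : N) ⟨n, hn⟩)
  have hcen : N.subgroupOf (centralizer (N : Set G)) ≤ center (centralizer (N : Set G)) :=
    fun x hx => mem_center_iff.mpr fun g =>
      Subtype.ext (mem_centralizer_iff.mp g.2 x (mem_subgroupOf.mp hx)).symm
  let e := (subgroupOfEquivOfLe hNH).symm
  have : IsCyclic (N.subgroupOf (centralizer (N : Set G))) := isCyclic_of_surjective e e.surjective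
  have : Infinite (N.subgroupOf (centralizer (N : Set G))) := .of_injective e e.injective
  obtain ⟨q, hq, hker⟩ := exists_surjective_int_finite_ker_of_le_center hcen
  exact exists_surjective_dihedralGroup_finite_ker_of_index_eq_two (index_centralizer_eq_two ht)
    (q.map_conj_eq_inv_of_conj_eq_inv (N := N)
      ((mem_centralizer_or_inv_mul_mul_eq_inv t).resolve_left ht)) hq ht

/-- Every infinite virtually cyclic group `G` either admits an epimorphism onto `ℤ`
(and then `G ≅ F ⋊ ℤ` with `F` finite) or admits an epimorphism onto the infinite
dihedral group `D_∞` (realized as `DihedralGroup 0`) with finite kernel. -/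
theorem stmt1 (G : Type) [Group G] [Infinite G]
    (hvc : ∃ C : Subgroup G, IsCyclic C ∧ C.index ≠ 0) :
    (∃ f : G →* Multiplicative ℤ, Function.Surjective f ∧ Finite f.ker ∧
      ∃ φ : Multiplicative ℤ →* MulAut f.ker,
        Nonempty (G ≃* f.ker ⋊[φ] Multiplicative ℤ)) ∨
    (∃ f : G →* DihedralGroup 0, Function.Surjective f ∧ Finite f.ker) := by
  obtain ⟨C, _, hC⟩ := hvc
  have : C.FiniteIndex := ⟨hC⟩
  obtain ⟨N, _, _, _, _⟩ := exists_normal_isCyclic_infinite_finiteIndex C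
  by_cases hN : N ≤ center G
  · obtain ⟨q, hq, hker⟩ := exists_surjective_int_finite_ker_of_le_center hN
    exact .inl ⟨q, hq, hker, q.exists_mulEquiv_semidirectProduct_int hq⟩
  · exact .inr (exists_surjective_dihedralGroup_finite_ker_of_not_le_center hN)
end

section
/- A virtually cyclic group is either finite, or maps onto ℤ, or maps onto the infinite dihedral group D_∞. -/
/-!
Let `G` be infinite and virtually cyclic. The normal core `N` of a cyclic subgroup of finite index
is an infinite cyclic normal subgroup of finite index, and `G` acts on `N` through
`Aut N ≅ ℤˣ = {±1}`, so the centralizer `K` of `N` has index `1` or `2`.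

Since `N` is central in `K`, the transfer `ψ : K → N ≅ ℤ` is `x ↦ x ^ [K : N]` on `N`, hence
injective on `N`. If `K = G` this is a nontrivial homomorphism `G → ℤ`, and the image of any such
homomorphism is again infinite cyclic. If `[G : K] = 2`, pick `t ∉ K` and let `c` be conjugation
by `t` on `K`. As `c²` is inner and `ψ` is a class function, `F = ψ - ψ ∘ c` satisfies
`F ∘ c = -F`, and `F ≠ 0` because `t` does not centralize `N`. Rescaling `F` to a surjection
`E : K → ℤ`, the map `k ↦ r (E k)`, `k t ↦ sr (-E k)` is a homomorphism from `G` onto `D_∞`.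
-/

open Subgroup Function

theorem MonoidHom.injOn_transfer_of_le_center {H A : Type*} [Group H] [CommGroup A]
    [IsMulTorsionFree A] {N : Subgroup H} [N.FiniteIndex] (hN : N ≤ center H) {φ : N →* A}
    (hφ : Injective φ) : Set.InjOn (transfer φ) N := by
  have transfer_eq (x : H) (hx : x ∈ N) : transfer φ x = φ ⟨x, hx⟩ ^ N.index := by
    rw [transfer_eq_pow φ x fun k g₀ _ => ?_, ← map_pow]
    · rfl
    · rw [mul_assoc, ← mem_center_iff.mp (pow_mem (hN hx) k) g₀, inv_mul_cancel_left]
  intro x hx y hy hxy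
  rw [transfer_eq x hx, transfer_eq y hy] at hxy
  exact congrArg Subtype.val (hφ (pow_left_injective FiniteIndex.index_ne_zero hxy))

theorem MonoidHom.exists_surjective_and_eq_zpow {H : Type*} [Group H]
    (f : H →* Multiplicative ℤ) (hf : f ≠ 1) :
    ∃ E : H →* Multiplicative ℤ, Surjective E ∧ ∃ n : ℤ, n ≠ 0 ∧ ∀ k, f k = E k ^ n := by
  obtain ⟨k₀, hk₀⟩ : ∃ k₀, f k₀ ≠ 1 := by
    by_contra! h
    exact hf (MonoidHom.ext h)
  have : Infinite f.range :=
    ((infinite_zpowers.mpr (not_isOfFinOrder_of_isMulTorsionFree hk₀)).mono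
      (zpowers_le.mpr (mem_range.mpr ⟨k₀, rfl⟩))).to_subtype
  let θ : Multiplicative ℤ ≃* f.range := intCyclicMulEquiv
  let E := θ.symm.toMonoidHom.comp f.rangeRestrict
  have hfE (k : H) : f k = E k ^ (θ (.ofAdd 1) : Multiplicative ℤ).toAdd := by
    have : f k = θ (E k) := by simp [E]
    simp only [this, θ, intEquivOfZPowersEqTop_apply, toAdd_ofAdd, zpow_one]
    apply Multiplicative.toAdd.injective
    rw [SubgroupClass.coe_zpow, toAdd_zpow, toAdd_zpow, smul_eq_mul, smul_eq_mul, mul_comm]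
  refine ⟨E, θ.symm.surjective.comp f.rangeRestrict_surjective, _, fun h => hk₀ ?_, hfE⟩
  rw [hfE, h, zpow_zero]

theorem IsCyclic.card_mulAut_of_infinite (N : Type*) [Group N] [IsCyclic N] [Infinite N] :
    Nat.card (MulAut N) = 2 := by
  rw [Nat.card_congr (IsCyclic.mulAutMulEquiv N).toEquiv, Nat.card_eq_zero_of_infinite (α := N)]
  exact (Nat.card_eq_fintype_card (α := ℤˣ)).trans Fintype.card_units_int

section

variable {G : Type*} [Group G]

namespace Subgroup

theorem ker_conjNormal (N : Subgroup G) [N.Normal] :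
    (MulAut.conjNormal : G →* MulAut N).ker = centralizer N := by
  ext g
  simp only [MonoidHom.mem_ker, mem_centralizer_iff, MulEquiv.ext_iff, Subtype.ext_iff,
    MulAut.conjNormal_apply, MulAut.one_apply, Subtype.forall, SetLike.mem_coe]
  refine forall₂_congr fun x _ => ?_
  rw [mul_inv_eq_iff_eq_mul, eq_comm]

theorem index_centralizer_eq_one_or_two (N : Subgroup G) [N.Normal] [IsCyclic N] [Infinite N] :
    (centralizer (N : Set G)).index = 1 ∨ (centralizer (N : Set G)).index = 2 := by
  have hcard := IsCyclic.card_mulAut_of_infinite N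
  have : Finite (MulAut N) := Nat.finite_of_card_ne_zero (by omega)
  rw [← ker_conjNormal, index_ker]
  have h₀ : 0 < Nat.card (MulAut.conjNormal : G →* MulAut N).range := Nat.card_pos
  have h₂ := hcard ▸ card_le_card_group (MulAut.conjNormal : G →* MulAut N).range
  omega

theorem exists_normal_isCyclic_infinite_finiteIndex [Infinite G]
    (hvc : ∃ C : Subgroup G, IsCyclic C ∧ C.index ≠ 0) :
    ∃ N : Subgroup G, N.Normal ∧ IsCyclic N ∧ Infinite N ∧ N.FiniteIndex := by
  obtain ⟨C, hC, hCi⟩ := hvc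
  have : C.FiniteIndex := ⟨hCi⟩
  refine ⟨C.normalCore, C.normalCore_normal, isCyclic_of_le C.normalCore_le, ?_, inferInstance⟩
  rw [← not_finite_iff_infinite]
  intro h
  have := (finite_iff_finite_and_finiteIndex C.normalCore).mpr ⟨h, inferInstance⟩
  exact not_finite G

end Subgroup

namespace MonoidHom

variable {K : Subgroup G} {t : G}

open scoped Classical in
noncomputable def extendByZero (E : K →* Multiplicative ℤ) (g : G) : ℤ :=
  if h : g ∈ K then (E ⟨g, h⟩).toAdd else 0

variable {E : K →* Multiplicative ℤ}

theorem extendByZero_of_mem {g : G} (hg : g ∈ K) : E.extendByZero g = (E ⟨g, hg⟩).toAdd := by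
  classical exact dif_pos hg

theorem extendByZero_mul {x y : G} (hx : x ∈ K) (hy : y ∈ K) :
    E.extendByZero (x * y) = E.extendByZero x + E.extendByZero y := by
  rw [extendByZero_of_mem hx, extendByZero_of_mem hy, extendByZero_of_mem (mul_mem hx hy),
    ← toAdd_mul, ← map_mul]
  rfl

theorem extendByZero_conj [K.Normal] (hE : ∀ k, E (MulAut.conjNormal t k) = (E k)⁻¹) {x : G}
    (hx : x ∈ K) : E.extendByZero (t * x * t⁻¹) = -E.extendByZero x := by
  have htx : t * x * t⁻¹ ∈ K := Normal.conj_mem ‹_› x hx t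
  have hc : MulAut.conjNormal t ⟨x, hx⟩ = ⟨t * x * t⁻¹, htx⟩ :=
    Subtype.ext (MulAut.conjNormal_apply t ⟨x, hx⟩)
  rw [extendByZero_of_mem hx, extendByZero_of_mem htx, ← hc, hE, toAdd_inv]

theorem extendByZero_mul_self [K.Normal] (hK : K.index = 2)
    (hE : ∀ k, E (MulAut.conjNormal t k) = (E k)⁻¹) : E.extendByZero (t * t) = 0 := by
  have htt : t * t ∈ K := (mul_mem_iff_of_index_two hK).mpr Iff.rfl
  have := extendByZero_conj hE htt
  rw [mul_assoc, mul_inv_cancel_right] at this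
  omega

open scoped Classical in
/-- With `G = K ⊔ K t`, this sends `k` to `r (E k)` and `k t` to `sr (-E k)`. The casts are
there because `ZMod 0` is `ℤ` only up to unfolding, which `ring` does not see through. -/
noncomputable def toDihedral_s2 (E : K →* Multiplicative ℤ) (t g : G) : DihedralGroup 0 :=
  if g ∈ K then .r (Int.cast (E.extendByZero g)) else .sr (Int.cast (-E.extendByZero (g * t⁻¹)))

theorem toDihedral_of_mem {g : G} (hg : g ∈ K) :
    E.toDihedral_s2 t g = .r (Int.cast (E.extendByZero g)) := by
  classical exact if_pos hg

theorem toDihedral_of_notMem {g : G} (hg : g ∉ K) :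
    E.toDihedral_s2 t g = .sr (Int.cast (-E.extendByZero (g * t⁻¹))) := by
  classical exact if_neg hg

theorem toDihedral_mul_s2 [K.Normal] (hK : K.index = 2) (ht : t ∉ K)
    (hE : ∀ k, E (MulAut.conjNormal t k) = (E k)⁻¹) (g₁ g₂ : G) :
    E.toDihedral_s2 t (g₁ * g₂) = E.toDihedral_s2 t g₁ * E.toDihedral_s2 t g₂ := by
  have hmem {g : G} (hg : g ∉ K) : g * t⁻¹ ∈ K :=
    (mul_mem_iff_of_index_two hK).mpr (iff_of_false hg (inv_mem_iff.not.mpr ht))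
  have htt : t * t ∈ K := (mul_mem_iff_of_index_two hK).mpr Iff.rfl
  have h₁₂ := mul_mem_iff_of_index_two hK (a := g₁) (b := g₂)
  by_cases h₁ : g₁ ∈ K <;> by_cases h₂ : g₂ ∈ K
  · rw [toDihedral_of_mem h₁, toDihedral_of_mem h₂, toDihedral_of_mem (h₁₂.mpr (iff_of_true h₁ h₂)),
      DihedralGroup.r_mul_r, extendByZero_mul h₁ h₂, Int.cast_add]
  · have h : g₁ * (g₂ * t⁻¹) = g₁ * g₂ * t⁻¹ := (mul_assoc _ _ _).symm
    rw [toDihedral_of_mem h₁, toDihedral_of_notMem h₂, toDihedral_of_notMem (mt h₁₂.mp (by tauto)),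
      DihedralGroup.r_mul_sr, ← h, extendByZero_mul h₁ (hmem h₂)]
    push_cast
    congr 1
    ring
  · have h : g₁ * t⁻¹ * (t * g₂ * t⁻¹) = g₁ * g₂ * t⁻¹ := by group
    rw [toDihedral_of_notMem h₁, toDihedral_of_mem h₂, toDihedral_of_notMem (mt h₁₂.mp (by tauto)),
      DihedralGroup.sr_mul_r, ← h, extendByZero_mul (hmem h₁) (Normal.conj_mem ‹_› g₂ h₂ t),
      extendByZero_conj hE h₂]
    push_cast
    congr 1
    ring
  · have h : g₁ * t⁻¹ * (t * (g₂ * t⁻¹) * t⁻¹) * (t * t) = g₁ * g₂ := by group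
    have h' := Normal.conj_mem ‹_› _ (hmem h₂) t
    rw [toDihedral_of_notMem h₁, toDihedral_of_notMem h₂,
      toDihedral_of_mem (h₁₂.mpr (iff_of_false h₁ h₂)), DihedralGroup.sr_mul_sr, ← h,
      extendByZero_mul (mul_mem (hmem h₁) h') htt, extendByZero_mul (hmem h₁) h',
      extendByZero_conj hE (hmem h₂), extendByZero_mul_self hK hE]
    push_cast
    congr 1
    ring

end MonoidHom

section Dihedral

open MonoidHom

variable {K : Subgroup G} [K.Normal] {t : G}

theorem exists_surjective_dihedral_of_index_eq_two (hK : K.index = 2) (ht : t ∉ K)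
    {E : K →* Multiplicative ℤ} (hEs : Surjective E)
    (hE : ∀ k, E (MulAut.conjNormal t k) = (E k)⁻¹) :
    ∃ f : G →* DihedralGroup 0, Surjective f := by
  refine ⟨.mk' (E.toDihedral_s2 t) (toDihedral_mul_s2 hK ht hE), ?_⟩
  rintro (i | i)
  · obtain ⟨k, hk⟩ := hEs (.ofAdd i)
    refine ⟨k, ?_⟩
    rw [mk'_apply, toDihedral_of_mem k.2, extendByZero_of_mem k.2, hk]
    rfl
  · obtain ⟨k, hk⟩ := hEs (.ofAdd (-i))
    have hkt : (k : G) * t ∉ K := fun h => ht ((mul_mem_cancel_left k.2).mp h)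
    refine ⟨k * t, ?_⟩
    rw [mk'_apply, toDihedral_of_notMem hkt, mul_inv_cancel_right, extendByZero_of_mem k.2, hk]
    exact congrArg _ (neg_neg i)

theorem exists_surjective_dihedral_of_map_conj_ne (hK : K.index = 2) (ht : t ∉ K)
    (ψ : K →* Multiplicative ℤ) {x : K} (hx : ψ (MulAut.conjNormal t x) ≠ ψ x) :
    ∃ f : G →* DihedralGroup 0, Surjective f := by
  let c : MulAut K := MulAut.conjNormal t
  have htt : t * t ∈ K := (mul_mem_iff_of_index_two hK).mpr Iff.rfl
  have hψc (k : K) : ψ (c (c k)) = ψ k := by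
    have : c (c k) = MulAut.conj (⟨t * t, htt⟩ : K) k := by
      rw [← MulAut.conjNormal_val, map_mul]
      rfl
    rw [this, MulAut.conj_apply, map_mul, map_mul, map_inv, mul_inv_cancel_comm]
  let F : K →* Multiplicative ℤ := ψ / ψ.comp c.toMonoidHom
  have hF (k : K) : F (c k) = (F k)⁻¹ := by
    simp only [F, MonoidHom.div_apply, MonoidHom.comp_apply, MulEquiv.coe_toMonoidHom, hψc,
      inv_div]
  have hF1 : F ≠ 1 := fun h => hx (div_eq_one.mp (DFunLike.congr_fun h x)).symm
  obtain ⟨E, hEs, n, hn, hFE⟩ := F.exists_surjective_and_eq_zpow hF1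
  refine exists_surjective_dihedral_of_index_eq_two hK ht hEs fun k => zpow_left_injective hn ?_
  simp only [← hFE, inv_zpow]
  exact hF k

end Dihedral

theorem exists_surjective_int_of_le_center {N : Subgroup G} [N.FiniteIndex] [IsCyclic N]
    [Infinite N] (hN : N ≤ center G) : ∃ f : G →* Multiplicative ℤ, Surjective f := by
  obtain ⟨y, hy⟩ := exists_ne (1 : N)
  let φ : N →* Multiplicative ℤ := intCyclicMulEquiv.symm.toMonoidHom
  have hψ := MonoidHom.injOn_transfer_of_le_center hN (φ := φ) intCyclicMulEquiv.symm.injective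
  have hψ1 : φ.transfer ≠ 1 := fun h =>
    hy (Subtype.ext (hψ y.2 (one_mem N) (by rw [h]; rfl)))
  obtain ⟨f, hf, -⟩ := φ.transfer.exists_surjective_and_eq_zpow hψ1
  exact ⟨f, hf⟩

theorem exists_surjective_dihedral_of_index_centralizer_eq_two (N : Subgroup G) [N.Normal]
    [N.FiniteIndex] [IsCyclic N] [Infinite N] (hK : (centralizer (N : Set G)).index = 2) :
    ∃ f : G →* DihedralGroup 0, Surjective f := by
  set K := centralizer (N : Set G)
  have hNK : N ≤ K := le_centralizer N
  let φ : N.subgroupOf K →* Multiplicative ℤ :=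
    intCyclicMulEquiv.symm.toMonoidHom.comp (subgroupOfEquivOfLe hNK).toMonoidHom
  have hφ : Injective φ :=
    intCyclicMulEquiv.symm.injective.comp (subgroupOfEquivOfLe hNK).injective
  have hψ := MonoidHom.injOn_transfer_of_le_center (fun x hx => mem_center_iff.mpr fun g =>
    Subtype.ext (mem_centralizer_iff.mp g.2 x hx).symm) hφ
  obtain ⟨t, ht, -⟩ := index_eq_two_iff_exists_notMem_and.mp hK
  obtain ⟨y, hy, hyt⟩ : ∃ y ∈ N, y * t ≠ t * y := by
    simpa [K, mem_centralizer_iff] using ht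
  refine exists_surjective_dihedral_of_map_conj_ne hK ht φ.transfer (x := ⟨y, hNK hy⟩)
    fun h => hyt ?_
  have := congrArg Subtype.val (hψ (Normal.conj_mem ‹_› y hy t) hy h)
  rw [MulAut.conjNormal_apply] at this
  exact (mul_inv_eq_iff_eq_mul.mp this).symm

end

/-- A virtually cyclic group is either finite, or maps onto `ℤ`, or maps onto the
infinite dihedral group `D_∞` (realized as `DihedralGroup 0`). -/
theorem stmt2 (G : Type) [Group G]
    (hvc : ∃ C : Subgroup G, IsCyclic C ∧ C.index ≠ 0) :
    Finite G ∨ (∃ f : G →* Multiplicative ℤ, Function.Surjective f) ∨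
      (∃ f : G →* DihedralGroup 0, Function.Surjective f) := by
  rcases finite_or_infinite G with hG | hG
  · exact .inl hG
  obtain ⟨N, _, _, _, _⟩ := exists_normal_isCyclic_infinite_finiteIndex hvc
  rcases index_centralizer_eq_one_or_two N with hK | hK
  · exact .inr (.inl (exists_surjective_int_of_le_center
      (centralizer_eq_top_iff_subset.mp (index_eq_one.mp hK))))
  · exact .inr (.inr (exists_surjective_dihedral_of_index_centralizer_eq_two N hK))
end

section
/- If G is an infinite group with a normal infinite cyclic subgroup C of finite index, then G surjects onto a subgroup of finite index of D_∞; in particular G surjects onto ℤ or onto D_∞. -/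
/-!
Conjugation makes `G` act on `C ≅ ℤ` through a character `χ : G →* ℤˣ = {±1}`.

If `χ` is trivial, `C` is central and the transfer `G → C ≅ ℤ` sends a generator `z` of `C` to
`z ^ [G : C] ≠ 1`. Its image is infinite cyclic, which gives a surjection onto `ℤ`, and through
the rotations `ℤ ≅ ⟨r 1⟩ ≤ D_∞` an image of index two in `D_∞`.

Otherwise `H = ker χ` has index two and contains `C` as a central subgroup, so the transfer
`τ : H → ℤ` is nonzero on `z`. An element `t ∉ H` inverts `z`, hence `h ↦ τ h - τ (t h t⁻¹)` is
nonzero on `z` and changes sign under conjugation by `t`. After dividing by the generator of its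
image, sending `H` to the rotations through it and `t` to a reflection defines a surjection
`G → D_∞`.
-/

open Subgroup DihedralGroup

theorem MonoidHom.exists_surjective_ker_eq {H : Type*} [Group H] (f : H →* Multiplicative ℤ)
    (hf : f ≠ 1) : ∃ g : H →* Multiplicative ℤ, Function.Surjective g ∧ g.ker = f.ker := by
  obtain ⟨x, hx⟩ := DFunLike.ne_iff.mp hf
  have : Infinite f.range :=
    ((infinite_zpowers.mpr (not_isOfFinOrder_of_isMulTorsionFree hx)).mono
      (f.range.zpowers_le.mpr ⟨x, rfl⟩)).to_subtype
  let e : f.range ≃* Multiplicative ℤ :=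
    mulEquivOfCyclicCardEq (by rw [Nat.card_eq_zero_of_infinite, Nat.card_eq_zero_of_infinite])
  exact ⟨e.toMonoidHom.comp f.rangeRestrict, e.surjective.comp f.rangeRestrict_surjective,
    by rw [ker_comp_of_injective _ _ e.injective, ker_rangeRestrict]⟩

theorem MonoidHom.transfer_coe_eq_pow_of_le_center {G A : Type*} [Group G] [CommGroup A]
    {H : Subgroup G} [H.FiniteIndex] (hH : H ≤ center G) (ϕ : H →* A) (h : H) :
    ϕ.transfer (h : G) = ϕ h ^ H.index := by
  rw [ϕ.transfer_eq_pow h fun k g₀ _ => by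
    rw [mul_assoc, (mem_center_iff.mp (hH (H.pow_mem h.2 k)) g₀).symm, inv_mul_cancel_left],
    ← map_pow]
  rfl

theorem MonoidHom.transfer_coe_ne_one_of_le_center {G A : Type*} [Group G] [CommGroup A]
    [IsMulTorsionFree A] {H : Subgroup G} [H.FiniteIndex] (hH : H ≤ center G) (ϕ : H →* A)
    {h : H} (hh : ϕ h ≠ 1) : ϕ.transfer (h : G) ≠ 1 := by
  rw [transfer_coe_eq_pow_of_le_center hH]
  exact (pow_eq_one_iff_left FiniteIndex.index_ne_zero).not.mpr hh

theorem exists_surjective_int_of_le_center_s3 {G : Type*} [Group G] {C : Subgroup G}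
    [C.FiniteIndex] (hC : C ≤ center G) (ϕ : C →* Multiplicative ℤ) (hϕ : ϕ ≠ 1) :
    ∃ f : G →* Multiplicative ℤ, Function.Surjective f := by
  obtain ⟨c, hc⟩ := DFunLike.ne_iff.mp hϕ
  obtain ⟨f, hf, -⟩ := ϕ.transfer.exists_surjective_ker_eq
    (DFunLike.ne_iff.mpr ⟨(c : G), ϕ.transfer_coe_ne_one_of_le_center hC hc⟩)
  exact ⟨f, hf⟩

theorem exists_conj_eq_zpow {G : Type*} [Group G] (C : Subgroup G) [C.Normal] [IsCyclic C]
    (hC : Nat.card C = 0) :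
    ∃ χ : G →* ℤˣ, ∀ (g : G) (c : C), g * c * g⁻¹ = (c : G) ^ (χ g : ℤ) := by
  let χ₀ : G →* ℤ :=
    (MulDistribMulAction.toMonoidHomZModOfIsCyclic C (ConjAct G) hC).comp
      ConjAct.toConjAct.toMonoidHom
  refine ⟨χ₀.toHomUnits, fun g c => ?_⟩
  have := MulDistribMulAction.toMonoidHomZModOfIsCyclic_apply hC (ConjAct.toConjAct g) c (χ₀ g) rfl
  rw [MonoidHom.coe_toHomUnits, ← ConjAct.toConjAct_smul, ← ConjAct.Subgroup.val_conj_smul, this]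
  rfl

theorem DihedralGroup.index_zpowers_r_one (n : ℕ) :
    (zpowers (r 1 : DihedralGroup n)).index = 2 := by
  have hr (i : ZMod n) : r i ∈ zpowers (r 1 : DihedralGroup n) :=
    mem_zpowers_iff.mpr ⟨(i.cast : ℤ), by rw [r_one_zpow, ZMod.intCast_zmod_cast]⟩
  refine index_eq_two_iff_exists_notMem_and.mpr ⟨sr 0, ?_, ?_⟩
  · intro h
    obtain ⟨k, hk⟩ := mem_zpowers_iff.mp h
    rw [r_one_zpow] at hk
    cases hk
  · rintro (i | i)
    · exact .inr (hr i)
    · exact .inl (by rw [sr_mul_sr]; exact hr _)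

theorem exists_surjective_int_conj_eq_inv {G : Type*} [Group G] {H : Subgroup G} [H.Normal]
    {t : G} (htt : t * t ∈ H) (τ : H →* Multiplicative ℤ) {z : H}
    (hz : t * z * t⁻¹ = (z : G)⁻¹) (hτz : τ z ≠ 1) :
    ∃ f : H →* Multiplicative ℤ, Function.Surjective f ∧
      ∀ a b : H, (a : G) = t * b * t⁻¹ → f a = (f b)⁻¹ := by
  let s : MulAut H := MulAut.conjNormal t
  have hss (h : H) : τ (s (s h)) = τ h := by
    rw [show s (s h) = ⟨t * t, htt⟩ * h * (⟨t * t, htt⟩ : H)⁻¹ by ext; simp [s, mul_assoc],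
      map_mul, map_mul, map_inv, mul_inv_cancel_comm]
  let f₂ : H →* Multiplicative ℤ := τ / τ.comp s.toMonoidHom
  have hf₂ (h : H) : f₂ (s h) = (f₂ h)⁻¹ := by
    simp only [f₂, MonoidHom.div_apply, MonoidHom.comp_apply, MulEquiv.coe_toMonoidHom, hss,
      inv_div]
  have hf₂z : f₂ z = τ z ^ 2 := by
    have hsz : s z = z⁻¹ := Subtype.ext (by simp [s, hz])
    simp only [f₂, MonoidHom.div_apply, MonoidHom.comp_apply, MulEquiv.coe_toMonoidHom, hsz,
      map_inv, div_inv_eq_mul, sq]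
  obtain ⟨f, hf, hker⟩ := f₂.exists_surjective_ker_eq
    (DFunLike.ne_iff.mpr ⟨z, by rwa [hf₂z, MonoidHom.one_apply, Ne, sq_eq_one]⟩)
  refine ⟨f, hf, fun a b hab => ?_⟩
  obtain rfl : a = s b := Subtype.ext hab
  have : s b * b ∈ f.ker := by rw [hker, MonoidHom.mem_ker, map_mul, hf₂, inv_mul_cancel]
  exact eq_inv_of_mul_eq_one_left (by rwa [MonoidHom.mem_ker, map_mul] at this)

theorem exists_surjective_dihedral_of_index_eq_two_s3 {G : Type*} [Group G] {H : Subgroup G}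
    (hH : H.index = 2) {t : G} (ht : t ∉ H) (f : H →* Multiplicative ℤ)
    (hf : Function.Surjective f) (hft : ∀ a b : H, (a : G) = t * b * t⁻¹ → f a = (f b)⁻¹) :
    ∃ F : G →* DihedralGroup 0, Function.Surjective F := by
  classical
  have := normal_of_index_eq_two hH
  have htt : t * t ∈ H := (mul_mem_iff_of_index_two hH).mpr Iff.rfl
  have hmem {g : G} (hg : g ∉ H) : t⁻¹ * g ∈ H :=
    (mul_mem_iff_of_index_two hH).mpr (iff_of_false (by simpa using ht) hg)
  let s : MulAut H := MulAut.conjNormal t⁻¹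
  have hs (h : H) : f (s h) = (f h)⁻¹ :=
    inv_eq_iff_eq_inv.mp (hft _ _ (by simp [s, mul_assoc])).symm
  -- `t * t` commutes with `t`, so `f (t * t)` is its own inverse
  have hftt : f ⟨t * t, htt⟩ = 1 := self_eq_inv.mp (hft _ _ (by simp [mul_assoc]))
  let ρ := zpowersHom (DihedralGroup 0) (r 1)
  have hρ (x : Multiplicative ℤ) : ρ x * sr 0 = sr 0 * (ρ x)⁻¹ := by
    simp [ρ, r_mul_sr, inv_r, sr_mul_r]
  let F₀ (g : G) : DihedralGroup 0 :=
    if hg : g ∈ H then ρ (f ⟨g, hg⟩) else sr 0 * ρ (f ⟨t⁻¹ * g, hmem hg⟩)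
  have F₀_coe (h : H) : F₀ h = ρ (f h) := dif_pos h.2
  have F₀_mul (h : H) : F₀ (t * h) = sr 0 * ρ (f h) := by
    have : t * h ∉ H := fun hth => ht (by simpa using H.mul_mem hth (H.inv_mem h.2))
    simp only [F₀, dif_neg this, inv_mul_cancel_left]
  have hcases (g : G) : ∃ h : H, g = h ∨ g = t * h := by
    by_cases hg : g ∈ H
    · exact ⟨⟨g, hg⟩, .inl rfl⟩
    · exact ⟨⟨t⁻¹ * g, hmem hg⟩, .inr (mul_inv_cancel_left t g).symm⟩
  refine ⟨MonoidHom.mk' F₀ fun x y => ?_, ?_⟩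
  · obtain ⟨a, rfl | rfl⟩ := hcases x <;> obtain ⟨b, rfl | rfl⟩ := hcases y
    · rw [← coe_mul, F₀_coe, F₀_coe, F₀_coe, map_mul, map_mul]
    · rw [show (a : G) * (t * b) = t * ↑(s a * b) by simp [s, mul_assoc], F₀_mul, F₀_coe, F₀_mul]
      simp only [map_mul, map_inv, hs]
      rw [← mul_assoc, ← mul_assoc, hρ]
    · rw [mul_assoc, ← coe_mul, F₀_mul, F₀_mul, F₀_coe, map_mul, map_mul, mul_assoc]
    · rw [show t * a * (t * b) = ↑(⟨t * t, htt⟩ * s a * b) by simp [s, mul_assoc], F₀_coe, F₀_mul,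
        F₀_mul]
      simp only [map_mul, map_inv, hs, hftt, one_mul]
      rw [← mul_assoc, mul_assoc (sr 0), hρ, ← mul_assoc, sr_mul_self, one_mul]
  -- `ZMod 0` is `ℤ`, so `i` is already an integer
  · rintro (i | i) <;> obtain ⟨h, hh⟩ := hf (.ofAdd i)
    · exact ⟨h, by simp [F₀_coe, hh, ρ]; rfl⟩
    · exact ⟨t * h, by simp [F₀_mul, hh, ρ, sr_mul_r]; rfl⟩

theorem le_ker_of_conj_eq_zpow {G : Type*} [Group G] {C : Subgroup G}
    (ϕ : C ≃* Multiplicative ℤ) (χ : G →* ℤˣ)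
    (hχ : ∀ (g : G) (c : C), g * c * g⁻¹ = (c : G) ^ (χ g : ℤ)) : C ≤ χ.ker := fun c hc => by
  let z : C := ϕ.symm (.ofAdd 1)
  have hcz : (⟨c, hc⟩ : C) * z = z * ⟨c, hc⟩ := ϕ.injective (by simp [mul_comm])
  have hzpow : z ^ (χ c : ℤ) = z := by
    apply Subtype.ext
    rw [coe_zpow, ← hχ, mul_inv_eq_iff_eq_mul]
    exact congrArg Subtype.val hcz
  have := congrArg ϕ hzpow
  simp only [map_zpow, z, MulEquiv.apply_symm_apply, ← ofAdd_zsmul, smul_eq_mul, mul_one,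
    EmbeddingLike.apply_eq_iff_eq] at this
  exact Units.val_eq_one.mp this

theorem MonoidHom.index_ker_eq_two_of_ne_one {G : Type*} [Group G] (χ : G →* ℤˣ) (hχ : χ ≠ 1) :
    χ.ker.index = 2 := by
  obtain ⟨t, ht⟩ := DFunLike.ne_iff.mp hχ
  replace ht : χ t = -1 := (Int.units_eq_one_or _).resolve_left ht
  refine index_eq_two_iff_exists_notMem_and.mpr ⟨t, by simp [ht], fun b => ?_⟩
  rcases Int.units_eq_one_or (χ b) with hb | hb
  · exact .inr hb
  · exact .inl (by simp [hb, ht])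

theorem exists_surjective_dihedral_of_ne_one {G : Type*} [Group G] {C : Subgroup G}
    [C.FiniteIndex] (ϕ : C ≃* Multiplicative ℤ) (χ : G →* ℤˣ)
    (hχ : ∀ (g : G) (c : C), g * c * g⁻¹ = (c : G) ^ (χ g : ℤ)) (hχ1 : χ ≠ 1) :
    ∃ F : G →* DihedralGroup 0, Function.Surjective F := by
  set H := χ.ker
  have hCH : C ≤ H := le_ker_of_conj_eq_zpow ϕ χ hχ
  obtain ⟨t, ht⟩ := DFunLike.ne_iff.mp hχ1
  replace ht : χ t = -1 := (Int.units_eq_one_or _).resolve_left ht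
  have hcentral : C.subgroupOf H ≤ center H := fun c hc => mem_center_iff.mpr fun g => by
    have := hχ g ⟨c, hc⟩
    rw [g.2, Units.val_one, zpow_one, mul_inv_eq_iff_eq_mul] at this
    exact Subtype.ext this
  let ϕ' : C.subgroupOf H →* Multiplicative ℤ :=
    ϕ.toMonoidHom.comp (subgroupOfEquivOfLe hCH).toMonoidHom
  let z : C := ϕ.symm (.ofAdd 1)
  let z' : H := ⟨z, hCH z.2⟩
  have hτz : ϕ'.transfer z' ≠ 1 :=
    ϕ'.transfer_coe_ne_one_of_le_center hcentral (h := ⟨z', z.2⟩)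
      (by rw [show ϕ' ⟨z', z.2⟩ = ϕ z from rfl, ϕ.apply_symm_apply]; simp)
  have hz : t * z' * t⁻¹ = (z' : G)⁻¹ := by simp [z', hχ t z, ht]
  obtain ⟨f, hf, hft⟩ := exists_surjective_int_conj_eq_inv (by simp [H, ht]) ϕ'.transfer hz hτz
  exact exists_surjective_dihedral_of_index_eq_two_s3 (χ.index_ker_eq_two_of_ne_one hχ1)
    (by simp [ht]) f hf hft

theorem stmt3_general (G : Type) [Group G] (C : Subgroup G) [C.Normal]
    (hcyc : IsCyclic C) (hinf : Infinite C) (hfin : C.index ≠ 0) :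
    (∃ f : G →* DihedralGroup 0, f.range.index ≠ 0) ∧
    ((∃ f : G →* Multiplicative ℤ, Function.Surjective f) ∨
      (∃ f : G →* DihedralGroup 0, Function.Surjective f)) := by
  have : C.FiniteIndex := ⟨hfin⟩
  have hC : Nat.card C = 0 := Nat.card_eq_zero_of_infinite
  let ϕ : C ≃* Multiplicative ℤ :=
    mulEquivOfCyclicCardEq (by rw [hC, Nat.card_eq_zero_of_infinite])
  obtain ⟨χ, hχ⟩ := exists_conj_eq_zpow C hC
  by_cases hχ1 : χ = 1
  · have hCcenter : C ≤ center G := fun c hc => mem_center_iff.mpr fun g => by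
      simpa [hχ1, mul_inv_eq_iff_eq_mul] using hχ g ⟨c, hc⟩
    obtain ⟨f, hf⟩ := exists_surjective_int_of_le_center_s3 hCcenter ϕ.toMonoidHom
      (DFunLike.ne_iff.mpr ⟨ϕ.symm (.ofAdd 1), by simp⟩)
    refine ⟨⟨(zpowersHom _ (r 1)).comp f, ?_⟩, .inl ⟨f, hf⟩⟩
    rw [MonoidHom.range_comp, MonoidHom.range_eq_top.mpr hf, ← MonoidHom.range_eq_map,
      range_zpowersHom, index_zpowers_r_one]
    exact two_ne_zero
  · obtain ⟨F, hF⟩ := exists_surjective_dihedral_of_ne_one ϕ χ hχ hχ1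
    refine ⟨⟨F, ?_⟩, .inr ⟨F, hF⟩⟩
    rw [MonoidHom.range_eq_top.mpr hF, index_top]
    exact one_ne_zero

/-- If `G` is an infinite group with a normal infinite cyclic subgroup `C` of finite
index, then `G` surjects onto a subgroup of finite index of `D_∞`; in particular `G`
surjects onto `ℤ` or onto `D_∞` (realized as `DihedralGroup 0`). -/
theorem stmt3 (G : Type) [Group G] [Infinite G] (C : Subgroup G) [C.Normal]
    (hcyc : IsCyclic C) (hinf : Infinite C) (hfin : C.index ≠ 0) :
    (∃ f : G →* DihedralGroup 0, f.range.index ≠ 0) ∧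
    ((∃ f : G →* Multiplicative ℤ, Function.Surjective f) ∨
      (∃ f : G →* DihedralGroup 0, Function.Surjective f)) :=
  stmt3_general G C hcyc hinf hfin
end

section
/- Let R be a ring, α : R → R a ring automorphism, and u ∈ Rˣ a unit. Let α'(r) = u α(r) u⁻¹. Then the α-twisted polynomial ring R_α[t] (with rt = tα(r)) is isomorphic as a ring to R_{α'}[t'] via the map fixing R and sending t ↦ t'u. -/
/-- The `α`-twisted polynomial ring `R_α[t]`, with `r·t = t·α(r)`.  An element is a
finitely supported function `ℕ →₀ R`, thought of as `∑ tᵏ·aₖ` (coefficients written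
on the right).  Multiplication is determined by `(tⁱa)(tʲb) = t^{i+j}·αʲ(a)·b`. -/
structure SkewPoly (R : Type) [Ring R] (α : RingAut R) where
  toFinsupp : ℕ →₀ R

namespace SkewPoly

variable {R : Type} [Ring R] {α : RingAut R}

noncomputable instance : Add (SkewPoly R α) :=
  ⟨fun f g => ⟨f.toFinsupp + g.toFinsupp⟩⟩

noncomputable instance : Mul (SkewPoly R α) :=
  ⟨fun f g =>
    ⟨f.toFinsupp.sum fun i a =>
      g.toFinsupp.sum fun j b => Finsupp.single (i + j) ((α ^ j) a * b)⟩⟩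

end SkewPoly

section aux
variable {R : Type} [Ring R]

lemma powSuccApply (α : RingAut R) (j : ℕ) (x : R) :
    α ((α ^ j) x) = (α ^ (j + 1)) x := by rw [pow_succ']; rfl

lemma powApplyComm (α : RingAut R) (j : ℕ) (x : R) :
    α ((α ^ j) x) = (α ^ j) (α x) := by
  rw [powSuccApply, pow_succ]; rfl

/-- `cₙ` with recursion `c₀ = 1`, `c_{n+1} = u·α(cₙ)`. -/
noncomputable def cc (α : RingAut R) (u : Rˣ) : ℕ → Rˣ
  | 0 => 1
  | n + 1 => u * Units.map (α : R →* R) (cc α u n)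

lemma cc_succ (α : RingAut R) (u : Rˣ) (n : ℕ) :
    ((cc α u (n+1) : Rˣ) : R) = (u : R) * α (cc α u n) := rfl

lemma cc_comm (α : RingAut R) (u : Rˣ) (j : ℕ) :
    (u : R) * α (cc α u j) = (cc α u j : R) * (α ^ j) (u : R) := by
  induction j with
  | zero =>
    rw [show ((cc α u 0 : Rˣ) : R) = 1 from rfl, map_one, mul_one, one_mul, pow_zero]
    rfl
  | succ j ih =>
    have hthis := congrArg α ih
    simp only [map_mul] at hthis
    rw [cc_succ, map_mul, mul_assoc, hthis, powSuccApply, ← mul_assoc]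

lemma cc_add (α : RingAut R) (u : Rˣ) (i j : ℕ) :
    ((cc α u (i + j) : Rˣ) : R) = (cc α u j : R) * (α ^ j) (cc α u i : R) := by
  induction i with
  | zero =>
    rw [Nat.zero_add, show ((cc α u 0 : Rˣ) : R) = 1 from rfl, map_one, mul_one]
  | succ i ih =>
    have h : i + 1 + j = (i + j) + 1 := by ring
    rw [h, cc_succ, ih, map_mul, ← mul_assoc, cc_comm, cc_succ, map_mul, mul_assoc,
      powApplyComm]

lemma conjPow (α α' : RingAut R) (u : Rˣ)
    (hα' : ∀ r : R, α' r = (u : R) * α r * (↑u⁻¹ : R)) (j : ℕ) (r : R) :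
    (α' ^ j) r * (cc α u j : R) = (cc α u j : R) * (α ^ j) r := by
  induction j with
  | zero =>
    rw [pow_zero, pow_zero, show ((cc α u 0 : Rˣ) : R) = 1 from rfl, mul_one, one_mul]
  | succ j ih =>
    have h1 : (α' ^ (j+1)) r = α' ((α' ^ j) r) := by rw [pow_succ']; rfl
    calc (α' ^ (j+1)) r * ↑(cc α u (j+1))
        = (↑u * α ((α' ^ j) r) * (↑u⁻¹ : R)) * ((u : R) * α ↑(cc α u j)) := by
          rw [h1, hα', cc_succ]
      _ = (u : R) * (α ((α' ^ j) r) * α ↑(cc α u j)) := by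
          rw [mul_assoc, mul_assoc, ← mul_assoc ((↑u⁻¹ : R)), Units.inv_mul, one_mul]
      _ = (u : R) * α ((α' ^ j) r * ↑(cc α u j)) := by rw [map_mul]
      _ = (u : R) * α (↑(cc α u j) * (α ^ j) r) := by rw [ih]
      _ = ((u : R) * α ↑(cc α u j)) * α ((α ^ j) r) := by rw [map_mul, mul_assoc]
      _ = ↑(cc α u (j+1)) * (α ^ (j+1)) r := by rw [cc_succ, powSuccApply]

/-- The key identity. -/
lemma keyIdent (α α' : RingAut R) (u : Rˣ)
    (hα' : ∀ r : R, α' r = (u : R) * α r * (↑u⁻¹ : R)) (i j : ℕ) (a b : R) :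
    (cc α u (i + j) : R) * ((α ^ j) a * b)
      = (α' ^ j) ((cc α u i : R) * a) * ((cc α u j : R) * b) := by
  calc (cc α u (i+j) : R) * ((α ^ j) a * b)
      = ((cc α u j : R) * (α ^ j) ↑(cc α u i)) * ((α ^ j) a * b) := by rw [cc_add]
    _ = ((α' ^ j) ↑(cc α u i) * ↑(cc α u j)) * ((α ^ j) a * b) := by
        rw [conjPow α α' u hα']
    _ = (α' ^ j) ↑(cc α u i) * ((↑(cc α u j) * (α ^ j) a) * b) := by
        rw [mul_assoc, mul_assoc]
    _ = (α' ^ j) ↑(cc α u i) * (((α' ^ j) a * ↑(cc α u j)) * b) := by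
        rw [conjPow α α' u hα']
    _ = (α' ^ j) ((cc α u i : R) * a) * ((cc α u j : R) * b) := by
        rw [map_mul, mul_assoc, mul_assoc]

/-- Multiply the `i`-th coefficient on the left by `c i`. -/
noncomputable def φ (c : ℕ → Rˣ) : (ℕ →₀ R) →+ (ℕ →₀ R) where
  toFun f := ⟨f.support, fun i => (c i : R) * f i, by
    intro i; simp [Units.mul_right_eq_zero]⟩
  map_zero' := by ext i; simp
  map_add' f g := by ext i; simp [mul_add]

lemma φ_apply (c : ℕ → Rˣ) (f : ℕ →₀ R) (i : ℕ) : φ c f i = (c i : R) * f i := rfl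

lemma φ_single (c : ℕ → Rˣ) (i : ℕ) (a : R) :
    φ c (Finsupp.single i a) = Finsupp.single i ((c i : R) * a) := by
  ext k
  rw [φ_apply]
  rcases eq_or_ne k i with h | h
  · subst h; simp
  · simp [Finsupp.single_apply, h, Ne.symm h]

lemma φ_sum {M : Type*} [AddCommMonoid M] (c : ℕ → Rˣ) (f : ℕ →₀ R)
    (G : ℕ → R → M) : (φ c f).sum G = f.sum fun i a => G i ((c i : R) * a) := rfl

lemma skewExt {α : RingAut R} {f g : ℕ →₀ R} (h : f = g) :
    (⟨f⟩ : SkewPoly R α) = ⟨g⟩ := by rw [h]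

end aux

/-- Scaling isomorphism: if `α' = u·α(–)·u⁻¹` for a unit `u`, then `R_α[t] ≅ R_{α'}[t']`
as rings, via the identity on `R` and `t ↦ t'·u`. -/
theorem stmt8 (R : Type) [Ring R] (α : RingAut R) (u : Rˣ) (α' : RingAut R)
    (hα' : ∀ r : R, α' r = (u : R) * α r * (↑u⁻¹ : R)) :
    ∃ e : SkewPoly R α ≃+* SkewPoly R α',
      (∀ r : R, e ⟨Finsupp.single 0 r⟩ = ⟨Finsupp.single 0 r⟩) ∧
      e ⟨Finsupp.single 1 (1 : R)⟩ = ⟨Finsupp.single 1 (u : R)⟩ := by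
  set c : ℕ → Rˣ := cc α u with hc
  refine ⟨{ toFun := fun f => ⟨φ c f.toFinsupp⟩
            invFun := fun f => ⟨φ (fun i => (c i)⁻¹) f.toFinsupp⟩
            left_inv := ?_
            right_inv := ?_
            map_add' := ?_
            map_mul' := ?_ }, ?_, ?_⟩
  · rintro ⟨f⟩
    refine skewExt ?_
    ext i
    rw [φ_apply, φ_apply, ← mul_assoc, Units.inv_mul, one_mul]
  · rintro ⟨f⟩
    refine skewExt ?_
    ext i
    rw [φ_apply, φ_apply, ← mul_assoc, Units.mul_inv, one_mul]
  · rintro ⟨f⟩ ⟨g⟩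
    show (⟨φ c (f.sum fun i a => g.sum fun j b => Finsupp.single (i+j) ((α ^ j) a * b))⟩ :
        SkewPoly R α')
      = ⟨(φ c f).sum fun i a => (φ c g).sum fun j b => Finsupp.single (i+j) ((α' ^ j) a * b)⟩
    refine skewExt ?_
    rw [map_finsuppSum, φ_sum]
    refine Finsupp.sum_congr fun i _ => ?_
    rw [map_finsuppSum, φ_sum]
    refine Finsupp.sum_congr fun j _ => ?_
    rw [φ_single, keyIdent α α' u hα']
  · rintro ⟨f⟩ ⟨g⟩
    show (⟨φ c (f + g)⟩ : SkewPoly R α') = ⟨φ c f + φ c g⟩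
    exact skewExt (map_add _ _ _)
  · intro r
    show (⟨φ c (Finsupp.single 0 r)⟩ : SkewPoly R α') = _
    rw [φ_single]
    simp [hc, cc]
  · show (⟨φ c (Finsupp.single 1 1)⟩ : SkewPoly R α') = _
    rw [φ_single]
    simp [hc, cc]
end

section
/- Let G = G₁ *_F G₂ be a free product with amalgamation where F has index 2 in both G₁ and G₂. Choose t₁ ∈ G₁ \ F and t₂ ∈ G₂ \ F and set t = t₁t₂. Then the kernel of the natural epimorphism G → D_∞ (induced by G₁ → ℤ/2, G₂ → ℤ/2 with kernels F) composed with D_∞ → ℤ/2 is the subgroup generated by F and t, it has index 2 in G, and it is isomorphic to F ⋊_α ℤ where α is conjugation by t⁻¹. -/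
/-!
Since `F` has index 2 in each `Gᵢ`, it is normal in both factors and hence `F` is normal in `G`.
Put `s = t₁` and `M = ⟨F, t⟩`. Conjugation by `s` preserves `M` (as `s t s⁻¹ = s² t₂² t⁻¹`),
`s² ∈ F`, and `M` together with `s` generates `G` because `Gᵢ = F ∪ F tᵢ` and `t₂ = s⁻¹ t`;
hence `G = M ∪ M s`. Now `π ∘ p` kills `F` and `t` but not `s`, so its kernel is `M`, of index 2.
Finally `(x, n) ↦ x t⁻ⁿ` maps `F ⋊_α ℤ` onto `M`, injectively since `p` kills `F` and sends `t`
to the rotation `r 1` of infinite order.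
-/

open Monoid

namespace Subgroup

variable {G : Type*} [Group G]

theorem sup_zpowers_eq_top_of_index_eq_two {H : Subgroup G} (hH : H.index = 2) {t : G}
    (ht : t ∉ H) : H ⊔ zpowers t = ⊤ := by
  refine eq_top_iff.2 fun x _ => ?_
  by_cases hx : x ∈ H
  · exact mem_sup_left hx
  · have hxt : x * t⁻¹ ∈ H := by
      rw [mul_mem_iff_of_index_two hH, inv_mem_iff]
      tauto
    simpa using mul_mem (mem_sup_left hxt) (mem_sup_right (mem_zpowers t))

theorem mem_or_mul_inv_mem_of_sup_zpowers_eq_top {M : Subgroup G} {s : G}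
    (hconj : ∀ m ∈ M, s * m * s⁻¹ ∈ M) (hs : s * s ∈ M) (htop : M ⊔ zpowers s = ⊤) (g : G) :
    g ∈ M ∨ g * s⁻¹ ∈ M := by
  let S : Subgroup G :=
    { carrier := {g | g ∈ M ∨ g * s⁻¹ ∈ M}
      one_mem' := Or.inl M.one_mem
      mul_mem' := by
        rintro x y (hx | hx) (hy | hy)
        · exact Or.inl (mul_mem hx hy)
        · exact Or.inr (by convert mul_mem hx hy using 1; group)
        · exact Or.inr (by convert mul_mem hx (hconj y hy) using 1; group)
        · exact Or.inl (by convert mul_mem (mul_mem hx (hconj _ hy)) hs using 1; group)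
      inv_mem' := by
        rintro x (hx | hx)
        · exact Or.inl (inv_mem hx)
        · exact Or.inr (by convert mul_mem (inv_mem hs) (hconj _ (inv_mem hx)) using 1; group) }
  have hS : M ⊔ zpowers s ≤ S :=
    sup_le (fun m hm => Or.inl hm) (zpowers_le.2 (Or.inr (by simp)))
  exact hS (htop ▸ mem_top g)

end Subgroup

theorem MonoidHom.index_ker_eq_two {G H : Type*} [Group G] [Group H] (hH : Nat.card H = 2)
    (χ : G →* H) {s : G} (hs : χ s ≠ 1) : χ.ker.index = 2 := by
  have : Fact (Nat.card H).Prime := ⟨hH ▸ Nat.prime_two⟩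
  have hrange : χ.range = ⊤ :=
    (χ.range.eq_bot_or_eq_top_of_prime_card).resolve_left fun h =>
      hs (Subgroup.mem_bot.1 (h ▸ ⟨s, rfl⟩))
  rw [Subgroup.index_ker, hrange, Subgroup.card_top, hH]

namespace SemidirectProduct

variable {N G H : Type*} [Group N] [Group G] [Group H] {φ : G →* MulAut N}

theorem range_lift (fn : N →* H) (fg : G →* H)
    (h : ∀ g, fn.comp (φ g).toMonoidHom = (MulAut.conj (fg g)).toMonoidHom.comp fn) :
    (lift fn fg h).range = fn.range ⊔ fg.range := by
  refine le_antisymm ?_ (sup_le ?_ ?_)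
  · rintro _ ⟨x, rfl⟩
    rw [← inl_left_mul_inr_right x, map_mul, lift_inl, lift_inr]
    exact mul_mem (Subgroup.mem_sup_left ⟨_, rfl⟩) (Subgroup.mem_sup_right ⟨_, rfl⟩)
  · rintro _ ⟨n, rfl⟩
    exact ⟨inl n, lift_inl fn fg h n⟩
  · rintro _ ⟨g, rfl⟩
    exact ⟨inr g, lift_inr fn fg h g⟩

end SemidirectProduct

section ConjugationAutomorphism

variable {F G : Type*} [Group F] [Group G] {ι : F →* G} {g : G}

theorem exists_mulAut_map_apply_eq_conj (hι : Function.Injective ι) [ι.range.Normal] (g : G) :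
    ∃ α : MulAut F, ∀ x, ι (α x) = g⁻¹ * ι x * g := by
  refine ⟨(MonoidHom.ofInjective hι).trans
    ((MulAut.conjNormal g⁻¹).trans (MonoidHom.ofInjective hι).symm), fun x => ?_⟩
  simp [MonoidHom.apply_ofInjective_symm, MonoidHom.ofInjective_apply]

variable {α : MulAut F}

theorem map_zpow_mulAut_apply (hα : ∀ x, ι (α x) = g⁻¹ * ι x * g) (n : ℤ) (x : F) :
    ι ((α ^ n) x) = MulAut.conj (g⁻¹ ^ n) (ι x) := by
  induction n using Int.induction_on generalizing x with
  | zero => simp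
  | succ k ih =>
    rw [zpow_add_one, MulAut.mul_apply, ih, hα, zpow_add_one]
    simp [mul_assoc]
  | pred k ih =>
    have hα_inv : ι (α⁻¹ x) = g * ι x * g⁻¹ := by
      simpa [mul_assoc] using congrArg (g * · * g⁻¹) (hα (α⁻¹ x)).symm
    rw [zpow_sub_one, MulAut.mul_apply, ih, hα_inv, zpow_sub_one]
    simp [mul_assoc]

-- The generator of `ℤ` goes to `g⁻¹`, not `g`, because `α` acts as conjugation by `g⁻¹`.
def SemidirectProduct.liftZPowers (hα : ∀ x, ι (α x) = g⁻¹ * ι x * g) :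
    F ⋊[zpowersHom (MulAut F) α] Multiplicative ℤ →* G :=
  SemidirectProduct.lift ι (zpowersHom G g⁻¹) fun n => by
    ext x
    simp [map_zpow_mulAut_apply hα]

namespace SemidirectProduct

variable (hα : ∀ x, ι (α x) = g⁻¹ * ι x * g)

theorem liftZPowers_apply (x : F ⋊[zpowersHom (MulAut F) α] Multiplicative ℤ) :
    liftZPowers hα x = ι x.left * g⁻¹ ^ x.right.toAdd := by
  rw [← inl_left_mul_inr_right x, liftZPowers, map_mul, lift_inl, lift_inr]
  simp

theorem range_liftZPowers : (liftZPowers hα).range = ι.range ⊔ Subgroup.zpowers g := by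
  rw [liftZPowers, range_lift, Subgroup.range_zpowersHom, Subgroup.zpowers_inv]

theorem liftZPowers_injective (hι : Function.Injective ι) {H : Type*} [Group H] (χ : G →* H)
    (hχι : ∀ x, χ (ι x) = 1) (hχg : ¬IsOfFinOrder (χ g)) :
    Function.Injective (liftZPowers hα) := by
  refine (injective_iff_map_eq_one _).2 fun x hx => ?_
  rw [liftZPowers_apply] at hx
  have hright : x.right = 1 := by
    have := congrArg χ hx
    rw [map_mul, hχι, one_mul, map_zpow, map_inv, inv_zpow', map_one] at this
    exact Multiplicative.toAdd.injective
      (neg_eq_zero.1 (injective_zpow_iff_not_isOfFinOrder.2 hχg (this.trans (zpow_zero _).symm)))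
  rw [hright, toAdd_one, zpow_zero, mul_one] at hx
  ext
  · exact hι (hx.trans ι.map_one.symm)
  · exact hright

end SemidirectProduct

namespace Monoid.PushoutI

section

variable {ι F : Type*} {G : ι → Type*} [Group F] [∀ i, Group (G i)] {φ : ∀ i, F →* G i}

theorem normal_range_base (hφ : ∀ i, (φ i).range.Normal) : (base φ).range.Normal where
  conj_mem n hn g := by
    induction g using PushoutI.induction_on generalizing n with
    | of i x =>
      obtain ⟨y, rfl⟩ := hn
      obtain ⟨z, hz⟩ := (hφ i).conj_mem _ ⟨y, rfl⟩ x
      exact ⟨z, by rw [← of_apply_eq_base φ i, ← of_apply_eq_base φ i, hz]; simp⟩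
    | base y => exact mul_mem (mul_mem ⟨y, rfl⟩ hn) ⟨y⁻¹, by simp⟩
    | mul x y ihx ihy => simpa [mul_assoc] using ihx _ (ihy n hn)

theorem eq_top_of_range_base_le_of_range_of_le {H : Subgroup (PushoutI φ)}
    (hbase : (base φ).range ≤ H) (hof : ∀ i, (of (φ := φ) i).range ≤ H) : H = ⊤ :=
  eq_top_iff.2 fun g _ =>
    PushoutI.induction_on g (fun i x => hof i ⟨x, rfl⟩) (fun y => hbase ⟨y, rfl⟩)
      fun _ _ => mul_mem

theorem range_of_eq_range_base_sup_zpowers {i : ι} {t : G i}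
    (ht : (φ i).range ⊔ Subgroup.zpowers t = ⊤) :
    (of (φ := φ) i).range = (base φ).range ⊔ Subgroup.zpowers (of i t) := by
  rw [MonoidHom.range_eq_map, ← ht, Subgroup.map_sup, MonoidHom.map_range, of_comp_eq_base,
    MonoidHom.map_zpowers]

end

section IndexTwo

variable {F : Type*} [Group F] {G : Bool → Type*} [∀ i, Group (G i)] {φ : ∀ i, F →* G i}
  {t₁ : G false} {t₂ : G true}

theorem of_mul_self_mem_range_base (hindex : ∀ i, (φ i).range.index = 2) (i : Bool) (x : G i) :
    of (φ := φ) i x * of i x ∈ (base φ).range := by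
  obtain ⟨y, hy⟩ := Subgroup.mul_self_mem_of_index_two (hindex i) x
  exact ⟨y, by rw [← of_apply_eq_base φ i, hy, map_mul]⟩

theorem conj_mem_range_base_sup_zpowers (hindex : ∀ i, (φ i).range.index = 2) :
    ∀ m ∈ (base φ).range ⊔ Subgroup.zpowers (of (φ := φ) false t₁ * of true t₂),
      of false t₁ * m * (of false t₁)⁻¹ ∈
        (base φ).range ⊔ Subgroup.zpowers (of (φ := φ) false t₁ * of true t₂) := by
  set s := of (φ := φ) false t₁
  set t := s * of true t₂
  have hN : (base φ).range.Normal :=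
    normal_range_base fun i => Subgroup.normal_of_index_eq_two (hindex i)
  have hsts : s * t * s⁻¹ = s * s * (of true t₂ * of true t₂) * t⁻¹ := by simp only [t]; group
  have hle : (base φ).range ⊔ Subgroup.zpowers t ≤
      ((base φ).range ⊔ Subgroup.zpowers t).comap (MulAut.conj s).toMonoidHom := by
    refine sup_le (fun n hn => Subgroup.mem_sup_left (hN.conj_mem n hn s))
      (Subgroup.zpowers_le.2 ?_)
    show s * t * s⁻¹ ∈ (base φ).range ⊔ Subgroup.zpowers t
    rw [hsts]
    exact mul_mem (Subgroup.mem_sup_left (mul_mem (of_mul_self_mem_range_base hindex false t₁)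
      (of_mul_self_mem_range_base hindex true t₂)))
      (Subgroup.mem_sup_right (inv_mem (Subgroup.mem_zpowers t)))
  exact fun m hm => hle hm

theorem range_base_sup_zpowers_sup_zpowers_eq_top (hindex : ∀ i, (φ i).range.index = 2)
    (ht₁ : t₁ ∉ (φ false).range) (ht₂ : t₂ ∉ (φ true).range) :
    (base φ).range ⊔ Subgroup.zpowers (of (φ := φ) false t₁ * of true t₂) ⊔
      Subgroup.zpowers (of (φ := φ) false t₁) = ⊤ := by
  refine eq_top_of_range_base_le_of_range_of_le (le_sup_left.trans le_sup_left) fun i => ?_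
  cases i
  · rw [range_of_eq_range_base_sup_zpowers
      (Subgroup.sup_zpowers_eq_top_of_index_eq_two (hindex false) ht₁)]
    exact sup_le_sup_right le_sup_left _
  · rw [range_of_eq_range_base_sup_zpowers
      (Subgroup.sup_zpowers_eq_top_of_index_eq_two (hindex true) ht₂)]
    refine sup_le (le_sup_left.trans le_sup_left) (Subgroup.zpowers_le.2 ?_)
    convert mul_mem (inv_mem (Subgroup.mem_sup_right (Subgroup.mem_zpowers (of false t₁))))
      (Subgroup.mem_sup_left (Subgroup.mem_sup_right
        (Subgroup.mem_zpowers (of (φ := φ) false t₁ * of true t₂)))) using 1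
    group

theorem eq_range_base_sup_zpowers_of_le (hindex : ∀ i, (φ i).range.index = 2)
    (ht₁ : t₁ ∉ (φ false).range) (ht₂ : t₂ ∉ (φ true).range) {K : Subgroup (PushoutI φ)}
    (hK : (base φ).range ⊔ Subgroup.zpowers (of (φ := φ) false t₁ * of true t₂) ≤ K)
    (ht₁K : of false t₁ ∉ K) :
    K = (base φ).range ⊔ Subgroup.zpowers (of (φ := φ) false t₁ * of true t₂) := by
  refine le_antisymm (fun g hg => ?_) hK
  refine (Subgroup.mem_or_mul_inv_mem_of_sup_zpowers_eq_top
    (conj_mem_range_base_sup_zpowers hindex)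
    (Subgroup.mem_sup_left (of_mul_self_mem_range_base hindex false t₁))
    (range_base_sup_zpowers_sup_zpowers_eq_top hindex ht₁ ht₂) g).resolve_right fun h => ht₁K ?_
  convert mul_mem (inv_mem (hK h)) hg using 1
  group

end IndexTwo

end Monoid.PushoutI

open scoped Classical in
/-- Let `G = G₁ *_F G₂` be an (injective) amalgamated free product in which `F` has
index 2 in both `G₁` and `G₂` (realized as the pushout `PushoutI φ` of the two
inclusions `φ i : F →* G i`, indexed by `i : Bool`).  Choose `t₁ ∈ G₁ \ F`,
`t₂ ∈ G₂ \ F` and set `t = t₁t₂`.  Let `p : G → D_∞` be the natural epimorphism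
(sending `Gᵢ → ℤ/2 ⊂ D_∞` with kernel `F`), and `π : D_∞ → ℤ/2` the epimorphism
with infinite cyclic kernel.  Then `ker (π ∘ p)` is the subgroup generated by `F`
and `t`, it has index 2 in `G`, and it is isomorphic to `F ⋊_α ℤ` where `α` is
conjugation by `t⁻¹` (equivalently, `t x t⁻¹ = α(x)` for `x ∈ F`). -/
theorem stmt11
    (F : Type) [Group F] (G : Bool → Type) [∀ i, Group (G i)]
    (φ : ∀ i, F →* G i) (hφ : ∀ i, Function.Injective (φ i))
    (hindex : ∀ i, (φ i).range.index = 2)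
    (t₁ : G false) (t₂ : G true)
    (ht₁ : t₁ ∉ (φ false).range) (ht₂ : t₂ ∉ (φ true).range)
    (p : PushoutI φ →* DihedralGroup 0)
    (hp : ∀ (i : Bool) (x : G i),
      p (PushoutI.of (φ := φ) i x) =
        if x ∈ (φ i).range then 1 else DihedralGroup.sr (if i then 1 else 0))
    (π : DihedralGroup 0 →* Multiplicative (ZMod 2))
    (hπr : ∀ a : ZMod 0, π (DihedralGroup.r a) = 1)
    (hπs : ∀ a : ZMod 0, π (DihedralGroup.sr a) = Multiplicative.ofAdd (1 : ZMod 2)) :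
    (π.comp p).ker =
      Subgroup.closure
        (Set.range (PushoutI.base φ) ∪
          {PushoutI.of (φ := φ) false t₁ * PushoutI.of (φ := φ) true t₂}) ∧
    (π.comp p).ker.index = 2 ∧
    ∃ α : MulAut F,
      (∀ x : F,
        PushoutI.base φ (α x) =
          (PushoutI.of (φ := φ) false t₁ * PushoutI.of (φ := φ) true t₂)⁻¹ *
            PushoutI.base φ x *
            (PushoutI.of (φ := φ) false t₁ * PushoutI.of (φ := φ) true t₂)) ∧
      Nonempty ((π.comp p).ker ≃*
        F ⋊[zpowersHom (MulAut F) α] Multiplicative ℤ) := by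
  set s := PushoutI.of (φ := φ) false t₁
  set t := s * PushoutI.of (φ := φ) true t₂
  set M := (PushoutI.base φ).range ⊔ Subgroup.zpowers t
  have hp_base (x : F) : p (PushoutI.base φ x) = 1 := by
    rw [← PushoutI.of_apply_eq_base φ false, hp, if_pos ⟨x, rfl⟩]
  have hp_t : p t = DihedralGroup.r 1 := by
    rw [map_mul, hp, hp, if_neg ht₁, if_neg ht₂]
    simp [DihedralGroup.sr_mul_sr]
  have hsK : s ∉ (π.comp p).ker := by simp [s, hp, ht₁, hπs]
  have hMK : M ≤ (π.comp p).ker := sup_le (by rintro _ ⟨x, rfl⟩; simp [hp_base])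
    (Subgroup.zpowers_le.2 (by simp [hp_t, hπr]))
  have hKM : (π.comp p).ker = M :=
    PushoutI.eq_range_base_sup_zpowers_of_le hindex ht₁ ht₂ hMK hsK
  have : (PushoutI.base φ).range.Normal :=
    PushoutI.normal_range_base fun i => Subgroup.normal_of_index_eq_two (hindex i)
  obtain ⟨α, hα⟩ := exists_mulAut_map_apply_eq_conj (PushoutI.base_injective hφ) t
  have hf_inj := SemidirectProduct.liftZPowers_injective hα (PushoutI.base_injective hφ) p
    hp_base (by rw [hp_t, ← orderOf_eq_zero_iff, DihedralGroup.orderOf_r_one])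
  refine ⟨hKM.trans ?_, MonoidHom.index_ker_eq_two (by simp) _ hsK, α, hα,
    ⟨(MulEquiv.subgroupCongr (hKM.trans (SemidirectProduct.range_liftZPowers hα).symm)).trans
      (MonoidHom.ofInjective hf_inj).symm⟩⟩
  rw [Subgroup.closure_union, ← Subgroup.zpowers_eq_closure, ← MonoidHom.coe_range,
    Subgroup.closure_eq]
end ConjugationAutomorphism
end

section
/- In the exact category Nil(R;B₁,B₂), for an object x = (P₁,P₂,ρ₁,ρ₂) define x' = (P₁, B₂⊗P₁ ⊕ P₂, (0,ρ₁)ᵀ, (1, ρ₂)), x'' = (P₁, B₂⊗P₁, ρ₂∘ρ₁, 1), a = (0,P₂,0,0), a' = (0,B₂⊗P₁,0,0), with morphisms f : x → x', g : a → x', g' : x' → a', h : a → a', f' : x' → x'' as given by the matrices f=(1,(0,1)ᵀ), g=(0,(-ρ₂,1)ᵀ), g'=(0,(1,0)), h=(0,ρ₂), f'=(1,(1,ρ₂)). Then 0 → x ⊕ a → x' ⊕ a → a' → 0 (with maps ((f,g),(0,1)) and (g',h)) and 0 → a → x' → x'' → 0 (with maps g and f') are short exact sequences in Nil(R;B₁,B₂).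 -/
open TensorProduct

section NCT

variable (R : Type) [Ring R]

/-- The subgroup of relations defining the balanced tensor product `B ⊗_R P` of a
right `R`-module `B` and a left `R`-module `P` over a possibly noncommutative ring
`R`.  When `B` is an `(R,R)`-bimodule the relations are stable under the left
`R`-action, so they form an `R`-submodule of `B ⊗_ℤ P`. -/
def balancedSub (B P : Type) [AddCommGroup B] [AddCommGroup P]
    [Module R B] [Module Rᵐᵒᵖ B] [Module R P] :
    Submodule R (TensorProduct ℤ B P) :=
  Submodule.span R {z | ∃ (r : R) (b : B) (p : P),
    z = (MulOpposite.op r • b) ⊗ₜ[ℤ] p - b ⊗ₜ[ℤ] (r • p)}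

/-- The balanced tensor product `B ⊗_R P` over a possibly noncommutative ring `R`,
where `B` is an `(R,R)`-bimodule and `P` a left `R`-module.  It is a left
`R`-module via the left action on `B`. -/
abbrev NCT (B P : Type) [AddCommGroup B] [AddCommGroup P]
    [Module R B] [Module Rᵐᵒᵖ B] [Module R P] : Type :=
  TensorProduct ℤ B P ⧸ balancedSub R B P

/-- The image of `b ⊗ p` in the balanced tensor product `B ⊗_R P`. -/
noncomputable def NCT.mk {B P : Type} [AddCommGroup B] [AddCommGroup P]
    [Module R B] [Module Rᵐᵒᵖ B] [Module R P] (b : B) (p : P) : NCT R B P :=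
  Submodule.Quotient.mk (b ⊗ₜ[ℤ] p)

/-- Functoriality of the balanced tensor product: `1_B ⊗ f`. -/
noncomputable def NCT.lmap {B P Q : Type} [AddCommGroup B] [AddCommGroup P]
    [AddCommGroup Q] [Module R B] [Module Rᵐᵒᵖ B] [Module R P] [Module R Q]
    (f : P →ₗ[R] Q) : NCT R B P →ₗ[R] NCT R B Q := by
  refine Submodule.mapQ (balancedSub R B P) (balancedSub R B Q)
    (TensorProduct.AlgebraTensorModule.map (LinearMap.id : B →ₗ[R] B)
      (f.restrictScalars ℤ)) ?_
  rw [balancedSub, Submodule.span_le]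
  rintro z ⟨r, b, p, rfl⟩
  simp only [SetLike.mem_coe, Submodule.mem_comap, map_sub,
    TensorProduct.AlgebraTensorModule.map_tmul, LinearMap.id_coe, id_eq,
    LinearMap.coe_restrictScalars, map_smul]
  exact Submodule.subset_span ⟨r, b, f p, rfl⟩
  

variable (B₁ B₂ : Type) [AddCommGroup B₁] [AddCommGroup B₂]
  [Module R B₁] [Module Rᵐᵒᵖ B₁] [Module R B₂] [Module Rᵐᵒᵖ B₂]

/-- The iterated balanced tensor powers `(B₁ ⊗_R B₂)^{⊗k} ⊗_R P`, written in
nested form `B₁ ⊗ (B₂ ⊗ ( ⋯ ⊗ P))`. -/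
noncomputable def PairPow (P : Type) [AddCommGroup P] [Module R P] :
    ℕ → ModuleCat.{0} R :=
  fun k => Nat.rec (ModuleCat.of R P)
    (fun _ M => ModuleCat.of R (NCT R B₁ (NCT R B₂ M))) k

/-- The `k`-fold iterate `σᵏ : P → (B₁ ⊗_R B₂)^{⊗k} ⊗_R P` of a map
`σ : P → B₁ ⊗_R B₂ ⊗_R P`. -/
noncomputable def pairIter {P : Type} [AddCommGroup P] [Module R P]
    (σ : P →ₗ[R] NCT R B₁ (NCT R B₂ P)) :
    ∀ k : ℕ, P →ₗ[R] PairPow R B₁ B₂ P k :=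
  fun k => Nat.rec LinearMap.id
    (fun _ ih => ((NCT.lmap (B := B₁) R (NCT.lmap (B := B₂) R ih)).comp σ)) k

end NCT

section Nil16

variable (R : Type) [Ring R] (B₁ B₂ : Type) [AddCommGroup B₁] [AddCommGroup B₂]
  [Module R B₁] [Module Rᵐᵒᵖ B₁] [Module R B₂] [Module Rᵐᵒᵖ B₂]

/-- Nilpotency condition for an object `(P₁,P₂,ρ₁,ρ₂)` of `Nil(R;B₁,B₂)`:
the composite `ρ₂∘ρ₁` is nilpotent. -/
noncomputable def NilObj {P₁ P₂ : Type} [AddCommGroup P₁] [AddCommGroup P₂]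
    [Module R P₁] [Module R P₂]
    (ρ₁ : P₁ →ₗ[R] NCT R B₁ P₂) (ρ₂ : P₂ →ₗ[R] NCT R B₂ P₁) : Prop :=
  ∃ k : ℕ, pairIter R B₁ B₂ ((NCT.lmap (B := B₁) R ρ₂).comp ρ₁) k = 0

/-- A morphism `(f₁,f₂) : (P₁,P₂,ρ₁,ρ₂) → (Q₁,Q₂,σ₁,σ₂)` in `Nil(R;B₁,B₂)`:
a pair of `R`-module maps commuting with the structure maps. -/
def IsNilMor {P₁ P₂ Q₁ Q₂ : Type} [AddCommGroup P₁] [AddCommGroup P₂]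
    [AddCommGroup Q₁] [AddCommGroup Q₂]
    [Module R P₁] [Module R P₂] [Module R Q₁] [Module R Q₂]
    (ρ₁ : P₁ →ₗ[R] NCT R B₁ P₂) (ρ₂ : P₂ →ₗ[R] NCT R B₂ P₁)
    (σ₁ : Q₁ →ₗ[R] NCT R B₁ Q₂) (σ₂ : Q₂ →ₗ[R] NCT R B₂ Q₁)
    (f₁ : P₁ →ₗ[R] Q₁) (f₂ : P₂ →ₗ[R] Q₂) : Prop :=
  σ₁.comp f₁ = (NCT.lmap (B := B₁) R f₂).comp ρ₁ ∧
  σ₂.comp f₂ = (NCT.lmap (B := B₂) R f₁).comp ρ₂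

/-- The direct sum of two objects of `Nil(R;B₁,B₂)`: first structure map. -/
noncomputable def sumρ₁ {P₁ P₂ Q₁ Q₂ : Type} [AddCommGroup P₁] [AddCommGroup P₂]
    [AddCommGroup Q₁] [AddCommGroup Q₂]
    [Module R P₁] [Module R P₂] [Module R Q₁] [Module R Q₂]
    (ρ₁ : P₁ →ₗ[R] NCT R B₁ P₂) (σ₁ : Q₁ →ₗ[R] NCT R B₁ Q₂) :
    P₁ × Q₁ →ₗ[R] NCT R B₁ (P₂ × Q₂) :=
  LinearMap.coprod
    ((NCT.lmap (B := B₁) R (LinearMap.inl R P₂ Q₂)).comp ρ₁)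
    ((NCT.lmap (B := B₁) R (LinearMap.inr R P₂ Q₂)).comp σ₁)

/-- The direct sum of two objects of `Nil(R;B₁,B₂)`: second structure map. -/
noncomputable def sumρ₂ {P₁ P₂ Q₁ Q₂ : Type} [AddCommGroup P₁] [AddCommGroup P₂]
    [AddCommGroup Q₁] [AddCommGroup Q₂]
    [Module R P₁] [Module R P₂] [Module R Q₁] [Module R Q₂]
    (ρ₂ : P₂ →ₗ[R] NCT R B₂ P₁) (σ₂ : Q₂ →ₗ[R] NCT R B₂ Q₁) :
    P₂ × Q₂ →ₗ[R] NCT R B₂ (P₁ × Q₁) :=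
  LinearMap.coprod
    ((NCT.lmap (B := B₂) R (LinearMap.inl R P₁ Q₁)).comp ρ₂)
    ((NCT.lmap (B := B₂) R (LinearMap.inr R P₁ Q₁)).comp σ₂)

end Nil16

/-! The argument is bookkeeping with block matrices.  Nilpotency of an object only depends on
the composite `(1 ⊗ ρ₂) ∘ ρ₁`, which is `(1 ⊗ ρ₂) ∘ ρ₁` again for `x'` and `x''`, while `a` and
`a'` have `P₁ = 0`.  Morphism conditions for maps out of and into direct sums split into their
matrix entries, and the two sequences are componentwise split by elementary shears. -/

section NCTLemmas

variable {R : Type} [Ring R]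
variable {B P Q S : Type} [AddCommGroup B] [AddCommGroup P] [AddCommGroup Q]
  [AddCommGroup S] [Module R B] [Module Rᵐᵒᵖ B] [Module R P] [Module R Q]
  [Module R S]

theorem NCT.lmap_mk (f : P →ₗ[R] Q) (b : B) (p : P) :
    NCT.lmap R f (NCT.mk R b p) = NCT.mk R b (f p) := by
  simp [NCT.lmap, NCT.mk, Submodule.mapQ_apply]

theorem NCT.mk_add (b : B) (p q : P) :
    NCT.mk R b (p + q) = NCT.mk R b p + NCT.mk R b q := by
  simp only [NCT.mk, TensorProduct.tmul_add, Submodule.Quotient.mk_add]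

theorem NCT.hom_ext {M : Type*} [AddCommGroup M] [Module R M]
    {f g : NCT R B P →ₗ[R] M}
    (h : ∀ (b : B) (p : P), f (NCT.mk R b p) = g (NCT.mk R b p)) : f = g := by
  refine LinearMap.ext fun z => ?_
  obtain ⟨z, rfl⟩ := Submodule.Quotient.mk_surjective (balancedSub R B P) z
  induction z using TensorProduct.induction_on with
  | zero => simp only [Submodule.Quotient.mk_zero, map_zero]
  | tmul b p => exact h b p
  | add x y hx hy => simp only [Submodule.Quotient.mk_add, map_add, hx, hy]

theorem NCT.lmap_comp (f : P →ₗ[R] Q) (g : Q →ₗ[R] S) :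
    (NCT.lmap (B := B) R g).comp (NCT.lmap R f) = NCT.lmap R (g.comp f) :=
  NCT.hom_ext fun b p => by simp [NCT.lmap_mk]

theorem NCT.lmap_id :
    NCT.lmap (B := B) R (LinearMap.id : P →ₗ[R] P) = LinearMap.id :=
  NCT.hom_ext fun b p => by simp [NCT.lmap_mk]

theorem NCT.lmap_zero :
    NCT.lmap (B := B) R (0 : P →ₗ[R] Q) = 0 :=
  NCT.hom_ext fun b p => by
    rw [NCT.lmap_mk, LinearMap.zero_apply, LinearMap.zero_apply]
    simp [NCT.mk]

theorem NCT.lmap_prod (f : P →ₗ[R] Q) (g : P →ₗ[R] S) :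
    NCT.lmap (B := B) R (f.prod g) =
      (NCT.lmap R (LinearMap.inl R Q S)).comp (NCT.lmap R f) +
        (NCT.lmap R (LinearMap.inr R Q S)).comp (NCT.lmap R g) :=
  NCT.hom_ext fun b p => by
    simp only [NCT.lmap_mk, LinearMap.add_apply, LinearMap.comp_apply, LinearMap.prod_apply,
      Function.prod, LinearMap.inl_apply, LinearMap.inr_apply, ← NCT.mk_add, Prod.mk_add_mk,
      add_zero, zero_add]

end NCTLemmas

section NilCategory

variable {R : Type} [Ring R] {B₁ B₂ : Type} [AddCommGroup B₁] [AddCommGroup B₂]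
  [Module R B₁] [Module Rᵐᵒᵖ B₁] [Module R B₂] [Module Rᵐᵒᵖ B₂]
variable {P₁ P₂ Q₁ Q₂ T₁ T₂ : Type} [AddCommGroup P₁] [AddCommGroup P₂]
  [AddCommGroup Q₁] [AddCommGroup Q₂] [AddCommGroup T₁] [AddCommGroup T₂]
  [Module R P₁] [Module R P₂] [Module R Q₁] [Module R Q₂] [Module R T₁] [Module R T₂]

theorem NilObj.of_lmap_comp_eq {ρ₁ : P₁ →ₗ[R] NCT R B₁ P₂} {ρ₂ : P₂ →ₗ[R] NCT R B₂ P₁}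
    {σ₁ : P₁ →ₗ[R] NCT R B₁ Q₂} {σ₂ : Q₂ →ₗ[R] NCT R B₂ P₁}
    (h : (NCT.lmap R σ₂).comp σ₁ = (NCT.lmap R ρ₂).comp ρ₁) (hρ : NilObj R B₁ B₂ ρ₁ ρ₂) :
    NilObj R B₁ B₂ σ₁ σ₂ := by
  rwa [NilObj, h]

theorem NilObj.of_subsingleton [Subsingleton P₁] (ρ₁ : P₁ →ₗ[R] NCT R B₁ P₂)
    (ρ₂ : P₂ →ₗ[R] NCT R B₂ P₁) : NilObj R B₁ B₂ ρ₁ ρ₂ :=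
  ⟨0, Subsingleton.elim _ _⟩

section Morphisms

variable {ρ₁ : P₁ →ₗ[R] NCT R B₁ P₂} {ρ₂ : P₂ →ₗ[R] NCT R B₂ P₁}
  {σ₁ : Q₁ →ₗ[R] NCT R B₁ Q₂} {σ₂ : Q₂ →ₗ[R] NCT R B₂ Q₁}
  {τ₁ : T₁ →ₗ[R] NCT R B₁ T₂} {τ₂ : T₂ →ₗ[R] NCT R B₂ T₁}

theorem isNilMor_id : IsNilMor R B₁ B₂ ρ₁ ρ₂ ρ₁ ρ₂ LinearMap.id LinearMap.id := by
  simp only [IsNilMor, NCT.lmap_id, LinearMap.comp_id, LinearMap.id_comp, and_self]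

theorem isNilMor_zero : IsNilMor R B₁ B₂ ρ₁ ρ₂ σ₁ σ₂ 0 0 := by
  simp only [IsNilMor, NCT.lmap_zero, LinearMap.comp_zero, LinearMap.zero_comp, and_self]

theorem isNilMor_of_zero_structure (f₁ : P₁ →ₗ[R] Q₁) (f₂ : P₂ →ₗ[R] Q₂) :
    IsNilMor R B₁ B₂ (0 : P₁ →ₗ[R] NCT R B₁ P₂) 0 0 0 f₁ f₂ := by
  simp only [IsNilMor, LinearMap.comp_zero, LinearMap.zero_comp, and_self]

theorem IsNilMor.coprod {f₁ : P₁ →ₗ[R] T₁} {f₂ : P₂ →ₗ[R] T₂} {g₁ : Q₁ →ₗ[R] T₁}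
    {g₂ : Q₂ →ₗ[R] T₂} (hf : IsNilMor R B₁ B₂ ρ₁ ρ₂ τ₁ τ₂ f₁ f₂)
    (hg : IsNilMor R B₁ B₂ σ₁ σ₂ τ₁ τ₂ g₁ g₂) :
    IsNilMor R B₁ B₂ (sumρ₁ R B₁ ρ₁ σ₁) (sumρ₂ R B₂ ρ₂ σ₂) τ₁ τ₂
      (f₁.coprod g₁) (f₂.coprod g₂) := by
  simp only [IsNilMor, sumρ₁, sumρ₂, LinearMap.comp_coprod, ← LinearMap.comp_assoc,
    NCT.lmap_comp, LinearMap.coprod_inl, LinearMap.coprod_inr]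
  exact ⟨by rw [hf.1, hg.1], by rw [hf.2, hg.2]⟩

theorem IsNilMor.prod {f₁ : P₁ →ₗ[R] T₁} {f₂ : P₂ →ₗ[R] T₂} {g₁ : P₁ →ₗ[R] Q₁}
    {g₂ : P₂ →ₗ[R] Q₂} (hf : IsNilMor R B₁ B₂ ρ₁ ρ₂ τ₁ τ₂ f₁ f₂)
    (hg : IsNilMor R B₁ B₂ ρ₁ ρ₂ σ₁ σ₂ g₁ g₂) :
    IsNilMor R B₁ B₂ ρ₁ ρ₂ (sumρ₁ R B₁ τ₁ σ₁) (sumρ₂ R B₂ τ₂ σ₂)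
      (f₁.prod g₁) (f₂.prod g₂) := by
  simp only [IsNilMor, sumρ₁, sumρ₂, LinearMap.coprod_comp_prod, NCT.lmap_prod,
    LinearMap.add_comp, LinearMap.comp_assoc]
  exact ⟨by rw [hf.1, hg.1], by rw [hf.2, hg.2]⟩

theorem IsNilMor.upperTriangular {f₁ : P₁ →ₗ[R] T₁} {f₂ : P₂ →ₗ[R] T₂} {g₁ : Q₁ →ₗ[R] T₁}
    {g₂ : Q₂ →ₗ[R] T₂} (hf : IsNilMor R B₁ B₂ ρ₁ ρ₂ τ₁ τ₂ f₁ f₂)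
    (hg : IsNilMor R B₁ B₂ σ₁ σ₂ τ₁ τ₂ g₁ g₂) :
    IsNilMor R B₁ B₂ (sumρ₁ R B₁ ρ₁ σ₁) (sumρ₂ R B₂ ρ₂ σ₂)
      (sumρ₁ R B₁ τ₁ σ₁) (sumρ₂ R B₂ τ₂ σ₂)
      ((f₁.coprod g₁).prod (LinearMap.snd R P₁ Q₁))
      ((f₂.coprod g₂).prod (LinearMap.snd R P₂ Q₂)) := by
  rw [LinearMap.snd_eq_coprod, LinearMap.snd_eq_coprod]
  exact (hf.coprod hg).prod (isNilMor_zero.coprod isNilMor_id)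

end Morphisms

section Construction

variable {Z : Type} [AddCommGroup Z] [Module R Z]
variable (ρ₁ : P₁ →ₗ[R] NCT R B₁ P₂) (ρ₂ : P₂ →ₗ[R] NCT R B₂ P₁)

theorem lmap_coprod_id_comp_lmap_inr :
    (NCT.lmap R (LinearMap.coprod LinearMap.id ρ₂)).comp
        ((NCT.lmap R (LinearMap.inr R (NCT R B₂ P₁) P₂)).comp ρ₁) =
      (NCT.lmap R ρ₂).comp ρ₁ := by
  rw [← LinearMap.comp_assoc, NCT.lmap_comp, LinearMap.coprod_inr]

theorem isNilMor_inr :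
    IsNilMor R B₁ B₂ ρ₁ ρ₂ ((NCT.lmap R (LinearMap.inr R (NCT R B₂ P₁) P₂)).comp ρ₁)
      (LinearMap.coprod LinearMap.id ρ₂) LinearMap.id (LinearMap.inr R (NCT R B₂ P₁) P₂) := by
  rw [IsNilMor, LinearMap.coprod_inr, NCT.lmap_id, LinearMap.comp_id, LinearMap.id_comp]
  exact ⟨rfl, rfl⟩

theorem isNilMor_prod_neg_id :
    IsNilMor R B₁ B₂ (0 : Z →ₗ[R] NCT R B₁ P₂) 0
      ((NCT.lmap R (LinearMap.inr R (NCT R B₂ P₁) P₂)).comp ρ₁)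
      (LinearMap.coprod LinearMap.id ρ₂) 0 ((-ρ₂).prod LinearMap.id) := by
  rw [IsNilMor, LinearMap.coprod_comp_prod, LinearMap.id_comp, LinearMap.comp_id,
    neg_add_cancel]
  simp only [LinearMap.comp_zero, and_self]

theorem isNilMor_fst :
    IsNilMor R B₁ B₂ ((NCT.lmap R (LinearMap.inr R (NCT R B₂ P₁) P₂)).comp ρ₁)
      (LinearMap.coprod LinearMap.id ρ₂) (0 : Z →ₗ[R] NCT R B₁ (NCT R B₂ P₁)) 0
      0 (LinearMap.fst R (NCT R B₂ P₁) P₂) := by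
  rw [IsNilMor, ← LinearMap.comp_assoc, NCT.lmap_comp, LinearMap.fst_comp_inr]
  simp only [NCT.lmap_zero, LinearMap.comp_zero, LinearMap.zero_comp, and_self]

theorem isNilMor_coprod_id :
    IsNilMor R B₁ B₂ ((NCT.lmap R (LinearMap.inr R (NCT R B₂ P₁) P₂)).comp ρ₁)
      (LinearMap.coprod LinearMap.id ρ₂) ((NCT.lmap R ρ₂).comp ρ₁) LinearMap.id
      LinearMap.id (LinearMap.coprod LinearMap.id ρ₂) := by
  rw [IsNilMor, lmap_coprod_id_comp_lmap_inr, NCT.lmap_id]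
  exact ⟨rfl, rfl⟩

end Construction

end NilCategory

section Shears

variable {R : Type} [Ring R] {M Q : Type} [AddCommGroup M] [AddCommGroup Q]
  [Module R M] [Module R Q] (φ : Q →ₗ[R] M)

theorem injective_prod_neg_id : Function.Injective ((-φ).prod (LinearMap.id : Q →ₗ[R] Q)) :=
  fun _ _ h => congrArg Prod.snd h

theorem exact_prod_neg_id_coprod_id :
    Function.Exact ((-φ).prod (LinearMap.id : Q →ₗ[R] Q)) (LinearMap.coprod LinearMap.id φ) := by
  rintro ⟨x, q⟩
  simp only [LinearMap.coprod_apply, LinearMap.id_apply, Set.mem_range, LinearMap.prod_apply,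
    Function.prod, LinearMap.neg_apply, Prod.ext_iff, add_eq_zero_iff_eq_neg]
  exact ⟨fun hx => ⟨q, hx.symm, rfl⟩, fun ⟨_, hx, hq⟩ => hq ▸ hx.symm⟩

theorem surjective_coprod_id : Function.Surjective (LinearMap.coprod LinearMap.id φ) :=
  fun x => ⟨(x, 0), by simp⟩

theorem injective_prod_coprod_inr_snd :
    Function.Injective (((LinearMap.inr R M Q).coprod ((-φ).prod LinearMap.id)).prod
      (LinearMap.snd R Q Q)) := by
  rintro ⟨q₁, q₂⟩ ⟨q₁', q₂'⟩ h
  simp only [LinearMap.prod_apply, Function.prod, LinearMap.coprod_apply, LinearMap.inr_apply,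
    LinearMap.neg_apply, LinearMap.id_apply, LinearMap.snd_apply, Prod.mk_add_mk, zero_add,
    Prod.mk.injEq] at h
  obtain ⟨⟨-, h₁⟩, h₂⟩ := h
  subst h₂
  simpa using h₁

theorem exact_prod_coprod_inr_snd_coprod_fst :
    Function.Exact (((LinearMap.inr R M Q).coprod ((-φ).prod LinearMap.id)).prod
      (LinearMap.snd R Q Q)) ((LinearMap.fst R M Q).coprod φ) := by
  rintro ⟨⟨x, q⟩, q'⟩
  simp only [LinearMap.coprod_apply, LinearMap.fst_apply, add_eq_zero_iff_eq_neg,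
    Set.mem_range, LinearMap.prod_apply, Function.prod, LinearMap.inr_apply,
    LinearMap.neg_apply, LinearMap.id_apply, LinearMap.snd_apply, Prod.mk_add_mk, zero_add,
    Prod.ext_iff, Prod.exists]
  constructor
  · rintro rfl
    exact ⟨q - q', q', ⟨rfl, sub_add_cancel q q'⟩, rfl⟩
  · rintro ⟨_, _, ⟨hx, -⟩, rfl⟩
    exact hx.symm

theorem surjective_coprod_fst : Function.Surjective ((LinearMap.fst R M Q).coprod φ) :=
  fun x => ⟨((x, 0), 0), by simp⟩

end Shears

/-- For an object `x = (P₁,P₂,ρ₁,ρ₂)` of `Nil(R;B₁,B₂)`, with `X = B₂ ⊗_R P₁`,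
define `x' = (P₁, X ⊕ P₂, (0,ρ₁)ᵀ, (1,ρ₂))`, `x'' = (P₁, X, ρ₂∘ρ₁, 1)`,
`a = (0,P₂,0,0)`, `a' = (0,X,0,0)` and the morphisms `f = (1,(0,1)ᵀ) : x → x'`,
`g = (0,(-ρ₂,1)ᵀ) : a → x'`, `g' = (0,(1,0)) : x' → a'`, `h = (0,ρ₂) : a → a'`,
`f' = (1,(1,ρ₂)) : x' → x''`.  Then these are objects and morphisms of
`Nil(R;B₁,B₂)`, and `0 → x ⊕ a → x' ⊕ a → a' → 0` (with maps `((f,g),(0,1))` and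
`(g',h)`) and `0 → a → x' → x'' → 0` (with maps `g` and `f'`) are short exact
sequences in `Nil(R;B₁,B₂)` (exactness being componentwise). -/
theorem stmt16 (R : Type) [Ring R] (B₁ B₂ : Type) [AddCommGroup B₁] [AddCommGroup B₂]
    [Module R B₁] [Module Rᵐᵒᵖ B₁] [Module R B₂] [Module Rᵐᵒᵖ B₂]
    (P₁ P₂ : Type) [AddCommGroup P₁] [AddCommGroup P₂] [Module R P₁] [Module R P₂]
    (ρ₁ : P₁ →ₗ[R] NCT R B₁ P₂) (ρ₂ : P₂ →ₗ[R] NCT R B₂ P₁)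
    (hx : NilObj R B₁ B₂ ρ₁ ρ₂)
    -- the structure maps of x', x'', a, a'
    (ρ₁' : P₁ →ₗ[R] NCT R B₁ (NCT R B₂ P₁ × P₂))
    (ρ₂' : NCT R B₂ P₁ × P₂ →ₗ[R] NCT R B₂ P₁)
    (ρ₁'' : P₁ →ₗ[R] NCT R B₁ (NCT R B₂ P₁))
    (ρ₂'' : NCT R B₂ P₁ →ₗ[R] NCT R B₂ P₁)
    (aρ₁ : PUnit.{1} →ₗ[R] NCT R B₁ P₂) (aρ₂ : P₂ →ₗ[R] NCT R B₂ PUnit.{1})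
    (a'ρ₁ : PUnit.{1} →ₗ[R] NCT R B₁ (NCT R B₂ P₁))
    (a'ρ₂ : NCT R B₂ P₁ →ₗ[R] NCT R B₂ PUnit.{1})
    (h₁' : ρ₁' = (NCT.lmap (B := B₁) R (LinearMap.inr R (NCT R B₂ P₁) P₂)).comp ρ₁)
    (h₂' : ρ₂' = LinearMap.coprod LinearMap.id ρ₂)
    (h₁'' : ρ₁'' = (NCT.lmap (B := B₁) R ρ₂).comp ρ₁)
    (h₂'' : ρ₂'' = LinearMap.id)
    (ha₁ : aρ₁ = 0) (ha₂ : aρ₂ = 0) (ha'₁ : a'ρ₁ = 0) (ha'₂ : a'ρ₂ = 0) :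
    -- the new objects are objects of Nil(R;B₁,B₂)
    (NilObj R B₁ B₂ ρ₁' ρ₂' ∧ NilObj R B₁ B₂ ρ₁'' ρ₂'' ∧
      NilObj R B₁ B₂ aρ₁ aρ₂ ∧ NilObj R B₁ B₂ a'ρ₁ a'ρ₂) ∧
    -- f, g, g', h, f' are morphisms in Nil(R;B₁,B₂)
    (IsNilMor R B₁ B₂ ρ₁ ρ₂ ρ₁' ρ₂'
        LinearMap.id (LinearMap.inr R (NCT R B₂ P₁) P₂) ∧
      IsNilMor R B₁ B₂ aρ₁ aρ₂ ρ₁' ρ₂'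
        0 (LinearMap.prod (-ρ₂) LinearMap.id) ∧
      IsNilMor R B₁ B₂ ρ₁' ρ₂' a'ρ₁ a'ρ₂
        0 (LinearMap.fst R (NCT R B₂ P₁) P₂) ∧
      IsNilMor R B₁ B₂ aρ₁ aρ₂ a'ρ₁ a'ρ₂ 0 ρ₂ ∧
      IsNilMor R B₁ B₂ ρ₁' ρ₂' ρ₁'' ρ₂''
        LinearMap.id (LinearMap.coprod LinearMap.id ρ₂)) ∧
    -- the sequence 0 → x ⊕ a → x' ⊕ a → a' → 0 is short exact (componentwise)
    (IsNilMor R B₁ B₂ (sumρ₁ R B₁ ρ₁ aρ₁) (sumρ₂ R B₂ ρ₂ aρ₂)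
        (sumρ₁ R B₁ ρ₁' aρ₁) (sumρ₂ R B₂ ρ₂' aρ₂)
        (LinearMap.prod (LinearMap.coprod LinearMap.id 0)
          (LinearMap.snd R P₁ PUnit.{1}))
        (LinearMap.prod
          (LinearMap.coprod (LinearMap.inr R (NCT R B₂ P₁) P₂)
            (LinearMap.prod (-ρ₂) LinearMap.id))
          (LinearMap.snd R P₂ P₂)) ∧
      IsNilMor R B₁ B₂ (sumρ₁ R B₁ ρ₁' aρ₁) (sumρ₂ R B₂ ρ₂' aρ₂)
        a'ρ₁ a'ρ₂
        (0 : P₁ × PUnit.{1} →ₗ[R] PUnit.{1})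
        (LinearMap.coprod (LinearMap.fst R (NCT R B₂ P₁) P₂) ρ₂) ∧
      Function.Injective
        (LinearMap.prod (LinearMap.coprod LinearMap.id 0)
          (LinearMap.snd R P₁ PUnit.{1})) ∧
      Function.Injective
        (LinearMap.prod
          (LinearMap.coprod (LinearMap.inr R (NCT R B₂ P₁) P₂)
            (LinearMap.prod (-ρ₂) LinearMap.id))
          (LinearMap.snd R P₂ P₂)) ∧
      Function.Exact
        (LinearMap.prod (LinearMap.coprod LinearMap.id 0)
          (LinearMap.snd R P₁ PUnit.{1}))
        (0 : P₁ × PUnit.{1} →ₗ[R] PUnit.{1}) ∧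
      Function.Exact
        (LinearMap.prod
          (LinearMap.coprod (LinearMap.inr R (NCT R B₂ P₁) P₂)
            (LinearMap.prod (-ρ₂) LinearMap.id))
          (LinearMap.snd R P₂ P₂))
        (LinearMap.coprod (LinearMap.fst R (NCT R B₂ P₁) P₂) ρ₂) ∧
      Function.Surjective (0 : P₁ × PUnit.{1} →ₗ[R] PUnit.{1}) ∧
      Function.Surjective
        (LinearMap.coprod (LinearMap.fst R (NCT R B₂ P₁) P₂) ρ₂)) ∧
    -- the sequence 0 → a → x' → x'' → 0 is short exact (componentwise)
    (Function.Injective (0 : PUnit.{1} →ₗ[R] P₁) ∧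
      Function.Injective (LinearMap.prod (-ρ₂) (LinearMap.id : P₂ →ₗ[R] P₂)) ∧
      Function.Exact (0 : PUnit.{1} →ₗ[R] P₁) (LinearMap.id : P₁ →ₗ[R] P₁) ∧
      Function.Exact (LinearMap.prod (-ρ₂) (LinearMap.id : P₂ →ₗ[R] P₂))
        (LinearMap.coprod LinearMap.id ρ₂) ∧
      Function.Surjective (LinearMap.id : P₁ →ₗ[R] P₁) ∧
      Function.Surjective (LinearMap.coprod (LinearMap.id : NCT R B₂ P₁ →ₗ[R] _) ρ₂)) := by
  subst h₁' h₂' h₁'' h₂'' ha₁ ha₂ ha'₁ ha'₂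
  have first_comp_eq_id : (LinearMap.coprod LinearMap.id 0).prod (LinearMap.snd R P₁ PUnit.{1}) =
      LinearMap.id := by
    rw [LinearMap.coprod_zero_right, LinearMap.id_comp, LinearMap.pair_fst_snd]
  have g'_h_isNilMor := (isNilMor_fst (Z := PUnit.{1}) ρ₁ ρ₂).coprod
    (isNilMor_of_zero_structure (0 : PUnit.{1} →ₗ[R] PUnit.{1}) ρ₂)
  rw [LinearMap.coprod_zero_left, LinearMap.zero_comp] at g'_h_isNilMor
  refine ⟨⟨hx.of_lmap_comp_eq (lmap_coprod_id_comp_lmap_inr ρ₁ ρ₂),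
      hx.of_lmap_comp_eq (by rw [NCT.lmap_id, LinearMap.id_comp]),
      NilObj.of_subsingleton _ _, NilObj.of_subsingleton _ _⟩,
    ⟨isNilMor_inr ρ₁ ρ₂, isNilMor_prod_neg_id ρ₁ ρ₂, isNilMor_fst ρ₁ ρ₂,
      isNilMor_of_zero_structure 0 ρ₂, isNilMor_coprod_id ρ₁ ρ₂⟩,
    ⟨(isNilMor_inr ρ₁ ρ₂).upperTriangular (isNilMor_prod_neg_id ρ₁ ρ₂), g'_h_isNilMor,
      ?_, injective_prod_coprod_inr_snd ρ₂, ?_, exact_prod_coprod_inr_snd_coprod_fst ρ₂,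
      Function.surjective_to_subsingleton _, surjective_coprod_fst ρ₂⟩,
    ⟨Function.injective_of_subsingleton _, injective_prod_neg_id ρ₂,
      (LinearMap.exact_zero_iff_injective _ _).2 Function.injective_id,
      exact_prod_neg_id_coprod_id ρ₂, Function.surjective_id, surjective_coprod_id ρ₂⟩⟩
  · rw [first_comp_eq_id]
    exact Function.injective_id
  · rw [first_comp_eq_id, LinearMap.exact_zero_iff_surjective]
    exact Function.surjective_id
end

section
/- Let Γ = ℤ/2 * ℤ/3 ≅ PSL₂(ℤ). Then every virtually cyclic subgroup of Γ is either cyclic or infinite dihedral. -/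
/-!
In a free product, cancellation in reduced words shows that every torsion element is conjugate
into a factor, and that a nontrivial element of a factor is conjugated back into that factor only
by elements of the factor. For `Γ = ℤ/2 ∗ ℤ/3` this gives two facts: the kernel of
`Γ → ℤ/2 × ℤ/3 ≅ ℤ/6` is torsion-free, so finite subgroups embed in `ℤ/6` and are cyclic; and a
nontrivial torsion element commutes with no element of infinite order.

An infinite virtually cyclic group `H` has a normal infinite cyclic subgroup `⟨z⟩` of finite
index. Every element conjugates `z` to `z` or `z⁻¹`, so the centralizer `K` of `z` has index at
most two. By the second fact `K` is torsion-free, and as `z` is central in `K` the transfer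
`K → ⟨z⟩`, `g ↦ g ^ [K : ⟨z⟩]`, is injective, so `K` is infinite cyclic. If `K ≠ H`, an element
outside `K` inverts a generator of `K` and squares to `1`, which presents `H` as `D_∞`.
-/

open Monoid Subgroup
open scoped Monoid.Coprod

namespace Monoid.CoprodI

section Monoid

variable {ι : Type*} {M : ι → Type*} [∀ i, Monoid (M i)]

theorem exists_neWord_prod_eq {x : CoprodI M} (hx : x ≠ 1) :
    ∃ (i j : ι) (w : NeWord M i j), w.prod = x := by
  classical
  obtain ⟨i, j, w, hw⟩ := NeWord.of_word (Word.equiv x) fun h => hx <| by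
    rw [← Word.equiv.symm_apply_apply x, h]; rfl
  exact ⟨i, j, w, by rw [NeWord.prod, hw]; exact Word.equiv.symm_apply_apply x⟩

namespace NeWord

theorem toList_eq_of_prod_eq {i j k l} {w : NeWord M i j} {w' : NeWord M k l}
    (h : w.prod = w'.prod) : w.toList = w'.toList := by
  classical
  exact congrArg Word.toList (Word.equiv.symm.injective h)

theorem prod_ne_one {i j} (w : NeWord M i j) : w.prod ≠ 1 := by
  classical
  intro h
  have : w.toWord = Word.empty := Word.equiv.symm.injective (h.trans Word.prod_empty.symm)
  exact w.toList_ne_nil (congrArg Word.toList this)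

theorem length_toList_pos {i j} (w : NeWord M i j) : 0 < w.toList.length :=
  List.length_pos_of_ne_nil w.toList_ne_nil

theorem two_le_length_toList_append {i j k l} (w₁ : NeWord M i j) (hne : j ≠ k)
    (w₂ : NeWord M k l) : 2 ≤ (append w₁ hne w₂).toList.length := by
  have := w₁.length_toList_pos
  have := w₂.length_toList_pos
  simp only [toList, List.length_append]
  omega

theorem two_le_length_toList {i j} (w : NeWord M i j) (hij : i ≠ j) : 2 ≤ w.toList.length := by
  cases w with
  | singleton => exact absurd rfl hij
  | append w₁ hne w₂ => exact two_le_length_toList_append w₁ hne w₂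

theorem not_isOfFinOrder_prod {i j} (w : NeWord M i j) (hij : i ≠ j) : ¬ IsOfFinOrder w.prod := by
  have hpow (n : ℕ) : ∃ v : NeWord M i j, v.prod = w.prod ^ (n + 1) := by
    induction n with
    | zero => exact ⟨w, (pow_one _).symm⟩
    | succ n ih =>
      obtain ⟨v, hv⟩ := ih
      exact ⟨v.append hij.symm w, by rw [append_prod, hv, ← pow_succ]⟩
  rw [isOfFinOrder_iff_pow_eq_one]
  rintro ⟨n, hn, h⟩
  obtain ⟨v, hv⟩ := hpow (n - 1)
  exact v.prod_ne_one (by rwa [hv, Nat.sub_add_cancel hn])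

theorem exists_prod_eq_of_head_mul_prod {i j} (w : NeWord M i j) (hw : 2 ≤ w.toList.length) :
    ∃ (k : ι) (v : NeWord M k j), k ≠ i ∧ w.prod = of w.head * v.prod ∧
      v.toList.length + 1 = w.toList.length := by
  induction w with
  | singleton => simp at hw
  | append w₁ hne w₂ ih₁ _ =>
    cases w₁ with
    | singleton a _ => exact ⟨_, w₂, hne.symm, by simp, by simp [add_comm]⟩
    | append w₁₁ hne₁ w₁₂ =>
      obtain ⟨k, v, hk, hv, hlen⟩ := ih₁ (two_le_length_toList_append w₁₁ hne₁ w₁₂)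
      refine ⟨k, v.append hne w₂, hk, ?_, by simp at hlen ⊢; omega⟩
      simp only [append_prod, hv, append_head, mul_assoc]

end NeWord

end Monoid

section Group

variable {ι : Type*} {G : ι → Type*} [∀ i, Group (G i)]

namespace NeWord

theorem length_toList_inv {i j} (w : NeWord G i j) : w.inv.toList.length = w.toList.length := by
  induction w with
  | singleton => rfl
  | append w₁ _ w₂ ih₁ ih₂ => simp [inv, ih₁, ih₂, add_comm]

theorem exists_prod_eq_prod_mul_of_last {i j} (w : NeWord G i j) (hw : 2 ≤ w.toList.length) :
    ∃ (k : ι) (v : NeWord G i k), k ≠ j ∧ w.prod = v.prod * of w.last ∧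
      v.toList.length + 1 = w.toList.length := by
  obtain ⟨k, v, hk, hv, hlen⟩ := w.inv.exists_prod_eq_of_head_mul_prod (by rwa [length_toList_inv])
  refine ⟨k, v.inv, hk, ?_, by rw [length_toList_inv, hlen, length_toList_inv]⟩
  rw [← inv_inv w.prod, ← inv_prod, hv, inv_head, inv_prod, mul_inv_rev, ← map_inv, inv_inv]

theorem conj_prod_ne_of {k l i i'} (v : NeWord G k l) (hl : l ≠ i) {c : G i} (hc : c ≠ 1)
    (m : G i') : v.prod * of c * v.prod⁻¹ ≠ of m := by
  let u := (v.append hl (singleton c hc)).append hl.symm v.inv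
  have hu : u.prod = v.prod * of c * v.prod⁻¹ := by simp [u]
  intro h
  by_cases hm : m = 1
  · exact u.prod_ne_one (by rw [hu, h, hm, map_one])
  · have := toList_eq_of_prod_eq (hu.trans (h.trans (prod_singleton m hm).symm))
    replace this := congrArg List.length this
    simp [u, length_toList_inv] at this
    have := v.length_toList_pos
    omega

theorem exists_conj_of_isOfFinOrder {i j} (w : NeWord G i j) (hw : IsOfFinOrder w.prod) :
    ∃ (g : CoprodI G) (k : ι) (m : G k), w.prod = g * of m * g⁻¹ := by
  induction h : w.toList.length using Nat.strong_induction_on generalizing i j w with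
  | _ n ih =>
  obtain rfl | hij := eq_or_ne i j
  swap
  · exact absurd hw (w.not_isOfFinOrder_prod hij)
  cases w with
  | singleton a _ => exact ⟨1, i, a, by simp⟩
  | append w₁ hne w₂ =>
    set w := append w₁ hne w₂
    obtain ⟨k, v, hki, hv, hvlen⟩ :=
      w.exists_prod_eq_of_head_mul_prod (two_le_length_toList_append w₁ hne w₂)
    obtain ⟨l, u, hli, hu, hulen⟩ := v.exists_prod_eq_prod_mul_of_last (v.two_le_length_toList hki)
    -- conjugating by the first letter merges it into the last one
    have hconj : (of w.head)⁻¹ * w.prod * ((of w.head)⁻¹)⁻¹ = u.prod * of (v.last * w.head) := by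
      rw [hv, hu, map_mul]; group
    have hfin := (isConj_iff.2 ⟨_, hconj⟩).isOfFinOrder hw
    by_cases hba : v.last * w.head = 1
    · rw [hba, map_one, mul_one] at hconj hfin
      obtain ⟨g, k', m, hg⟩ := ih u.toList.length (by omega) u hfin rfl
      refine ⟨of w.head * g, k', m, ?_⟩
      calc w.prod = of w.head * ((of w.head)⁻¹ * w.prod * ((of w.head)⁻¹)⁻¹) * (of w.head)⁻¹ := by
            group
        _ = _ := by rw [hconj, hg]; group
    · refine absurd ?_ ((u.append hli (singleton _ hba)).not_isOfFinOrder_prod hki)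
      rwa [append_prod, prod_singleton]

end NeWord

theorem exists_conj_of_isOfFinOrder {x : CoprodI G} (hx : IsOfFinOrder x) (hx1 : x ≠ 1) :
    ∃ (g : CoprodI G) (i : ι) (m : G i), x = g * of m * g⁻¹ := by
  obtain ⟨i, j, w, rfl⟩ := exists_neWord_prod_eq hx1
  exact w.exists_conj_of_isOfFinOrder hx

theorem exists_eq_of_of_conj_eq_of {x : CoprodI G} {i : ι} {m m' : G i} (hm : m ≠ 1)
    (h : x * of m * x⁻¹ = of m') : ∃ a : G i, x = of a := by
  by_cases hx : x = 1
  · exact ⟨1, by rw [hx, map_one]⟩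
  obtain ⟨i', j, w, rfl⟩ := exists_neWord_prod_eq hx
  obtain rfl | hj := eq_or_ne j i
  · cases w with
    | singleton a _ => exact ⟨a, NeWord.prod_singleton a _⟩
    | append w₁ hne w₂ =>
      set w := NeWord.append w₁ hne w₂
      obtain ⟨l, v, hl, hv, -⟩ :=
        w.exists_prod_eq_prod_mul_of_last (NeWord.two_le_length_toList_append w₁ hne w₂)
      have hc : w.last * m * w.last⁻¹ ≠ 1 := by simpa using hm
      refine absurd ?_ (v.conj_prod_ne_of hl hc m')
      rw [← h, hv, map_mul, map_mul, map_inv]; group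
  · exact absurd h (w.conj_prod_ne_of hj hm m')

theorem isOfFinOrder_of_commute (hG : ∀ i, IsMulTorsion (G i)) {t x : CoprodI G}
    (ht : IsOfFinOrder t) (ht1 : t ≠ 1) (h : Commute t x) : IsOfFinOrder x := by
  obtain ⟨g, i, m, rfl⟩ := exists_conj_of_isOfFinOrder ht ht1
  have hm : m ≠ 1 := by rintro rfl; simp at ht1
  obtain ⟨a, ha⟩ := exists_eq_of_of_conj_eq_of (x := g⁻¹ * x * g) (m' := m) hm <| by
    calc g⁻¹ * x * g * of m * (g⁻¹ * x * g)⁻¹ = g⁻¹ * (x * (g * of m * g⁻¹)) * x⁻¹ * g := by group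
      _ = g⁻¹ * ((g * of m * g⁻¹) * x) * x⁻¹ * g := by rw [h.eq]
      _ = of m := by group
  refine (isConj_iff.2 ⟨g, ?_⟩).isOfFinOrder (of.isOfFinOrder (hG i a))
  rw [← ha]; group

theorem eq_one_of_isOfFinOrder_of_map_eq_one {N : Type*} [Group N] (f : CoprodI G →* N)
    (hf : ∀ i, Function.Injective (f.comp (of (i := i)))) {t : CoprodI G} (ht : IsOfFinOrder t)
    (h : f t = 1) : t = 1 := by
  by_contra ht1
  obtain ⟨g, i, m, rfl⟩ := exists_conj_of_isOfFinOrder ht ht1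
  have hm : m = 1 := hf i <| by
    simpa [mul_inv_eq_one, mul_eq_left] using h
  simp [hm] at ht1

end Group

def mulEquivCoprodBool (G : Bool → Type*) [∀ b, Monoid (G b)] : CoprodI G ≃* G true ∗ G false :=
  MonoidHom.toMulEquiv (lift fun | true => Coprod.inl | false => Coprod.inr)
    (Coprod.lift of of)
    (ext_hom _ _ fun | true => rfl | false => rfl)
    (Coprod.hom_ext rfl rfl)

end Monoid.CoprodI

section VirtuallyCyclic

variable {G : Type*} [Group G]

open scoped IsMulCommutative in
theorem isCyclic_of_mem_center_of_finiteIndex {z : G} (hz : z ∈ center G)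
    [(zpowers z).FiniteIndex] (htf : ∀ g : G, IsOfFinOrder g → g = 1) : IsCyclic G := by
  -- Schur: the transfer to the central subgroup `⟨z⟩` is `g ↦ g ^ [G : ⟨z⟩]`.
  have key (k : ℕ) (g₀ g : G) (hk : g₀⁻¹ * g ^ k * g₀ ∈ zpowers z) :
      g₀⁻¹ * g ^ k * g₀ = g ^ k := by
    have hc : g₀⁻¹ * g ^ k * g₀ ∈ center G := zpowers_le.2 hz hk
    calc _ = g₀ * (g₀⁻¹ * g ^ k * g₀) * g₀⁻¹ := by rw [mem_center_iff.1 hc g₀, mul_inv_cancel_right]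
      _ = g ^ k := by group
  let τ : G →* zpowers z := MonoidHom.transfer (MonoidHom.id (zpowers z))
  refine isCyclic_of_injective τ ((injective_iff_map_eq_one τ).2 fun g hg => htf g ?_)
  have h := congrArg Subtype.val
    ((MonoidHom.transfer_eq_pow _ g fun k g₀ => key k g₀ g).symm.trans hg)
  exact isOfFinOrder_iff_pow_eq_one.2 ⟨_, Nat.pos_of_ne_zero FiniteIndex.index_ne_zero, h⟩

theorem isCyclic_centralizer_of_finiteIndex {z : G} [(zpowers z).FiniteIndex]
    (htf : ∀ g ∈ centralizer {z}, IsOfFinOrder g → g = 1) : IsCyclic (centralizer {z}) := by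
  have hzK : zpowers z ≤ centralizer {z} := by rw [zpowers_le, mem_centralizer_singleton_iff]
  let z' : centralizer {z} := ⟨z, hzK (mem_zpowers z)⟩
  have : (zpowers z').FiniteIndex := by
    refine finiteIndex_of_le (H := (zpowers z).subgroupOf (centralizer {z})) fun g hg => ?_
    obtain ⟨k, hk⟩ := mem_zpowers_iff.1 (mem_subgroupOf.1 hg)
    exact mem_zpowers_iff.2 ⟨k, Subtype.ext hk⟩
  refine isCyclic_of_mem_center_of_finiteIndex (z := z')
    (mem_center_iff.2 fun g => Subtype.ext (mem_centralizer_singleton_iff.1 g.2)) fun g hg => ?_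
  exact Subtype.ext (htf g g.2 ((centralizer {z}).subtype.isOfFinOrder hg))

theorem conj_eq_or_eq_inv_of_normal_zpowers {z : G} (hz : ¬ IsOfFinOrder z)
    [hN : (zpowers z).Normal] (g : G) : g * z * g⁻¹ = z ∨ g * z * g⁻¹ = z⁻¹ := by
  have h : zpowers z = zpowers (g * z * g⁻¹) := by
    refine le_antisymm (zpowers_le.2 ?_) (zpowers_le.2 (hN.conj_mem z (mem_zpowers z) g))
    obtain ⟨k, hk⟩ := mem_zpowers_iff.1 (hN.conj_mem z (mem_zpowers z) g⁻¹)
    refine mem_zpowers_iff.2 ⟨k, ?_⟩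
    rw [conj_zpow, hk]; group
  rcases (zpowers_eq_zpowers_iff hz).1 h with h | h
  · exact .inl h.symm
  · exact .inr h.symm

theorem exists_normal_zpowers_finiteIndex [Infinite G] (C : Subgroup G) [IsCyclic C]
    [C.FiniteIndex] :
    ∃ z : G, ¬ IsOfFinOrder z ∧ (zpowers z).Normal ∧ (zpowers z).FiniteIndex := by
  have : IsCyclic C.normalCore := isCyclic_of_le C.normalCore_le
  obtain ⟨z, hz⟩ := (C.normalCore.isCyclic_iff_exists_zpowers_eq_top).1 this
  refine ⟨z, fun h => ?_, hz ▸ C.normalCore_normal, hz ▸ inferInstance⟩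
  have : Finite (zpowers z) := h.finite_zpowers
  have : Finite G := (zpowers z).finite_iff_finite_and_finiteIndex.2 ⟨this, hz ▸ inferInstance⟩
  exact not_finite G

def DihedralGroup.liftZero {u s : G} (hs : s * s = 1) (hsu : s * u * s⁻¹ = u⁻¹) :
    DihedralGroup 0 →* G where
  toFun
    | .r (i : ℤ) => u ^ i
    | .sr (i : ℤ) => s * u ^ i
  map_one' := zpow_zero u
  map_mul' := by
    have hswap (k : ℤ) : u ^ k * s = s * u ^ (-k) := by
      rw [zpow_neg, ← inv_zpow, ← hsu, conj_zpow, ← mul_assoc, ← mul_assoc, hs, one_mul,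
        inv_eq_of_mul_eq_one_right hs]
    rintro ((i : ℤ) | (i : ℤ)) ((j : ℤ) | (j : ℤ))
    · exact zpow_add u i j
    · show s * u ^ (j - i) = u ^ i * (s * u ^ j)
      rw [← mul_assoc, hswap, mul_assoc, ← zpow_add, neg_add_eq_sub]
    · show s * u ^ (i + j) = s * u ^ i * u ^ j
      rw [mul_assoc, zpow_add]
    · show u ^ (j - i) = s * u ^ i * (s * u ^ j)
      rw [mul_assoc, ← mul_assoc (u ^ i), hswap, ← mul_assoc, ← mul_assoc, hs, one_mul,
        ← zpow_add, neg_add_eq_sub]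

theorem nonempty_mulEquiv_dihedralGroup_zero_of_conj_eq_inv {u s : G} (hu : ¬ IsOfFinOrder u)
    (hs : s ∉ zpowers u) (hsu : s * u * s⁻¹ = u⁻¹)
    (hcover : ∀ g ∉ zpowers u, s * g ∈ zpowers u) : Nonempty (G ≃* DihedralGroup 0) := by
  have hinj := injective_zpow_iff_not_isOfFinOrder.2 hu
  have hs2 : s * s = 1 := by
    obtain ⟨k, hk⟩ := mem_zpowers_iff.1 (hcover s hs)
    have : u ^ (-k) = u ^ k := by
      rw [zpow_neg, ← inv_zpow, ← hsu, conj_zpow, hk]; group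
    rw [← hk, show k = 0 by linarith [hinj this], zpow_zero]
  let f := DihedralGroup.liftZero hs2 hsu
  refine ⟨(MulEquiv.ofBijective f ⟨(injective_iff_map_eq_one f).2 ?_, fun g => ?_⟩).symm⟩
  · rintro ((i : ℤ) | (i : ℤ)) h
    · exact congrArg DihedralGroup.r (hinj (h.trans (zpow_zero u).symm))
    · refine absurd (mem_zpowers_iff.2 ⟨-i, ?_⟩) hs
      rw [zpow_neg]
      exact (eq_inv_of_mul_eq_one_left h).symm
  · by_cases hg : g ∈ zpowers u
    · obtain ⟨k, rfl⟩ := mem_zpowers_iff.1 hg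
      exact ⟨.r k, rfl⟩
    · obtain ⟨k, hk⟩ := mem_zpowers_iff.1 (hcover g hg)
      refine ⟨.sr k, ?_⟩
      show s * u ^ k = g
      rw [hk, ← mul_assoc, hs2, one_mul]

theorem isCyclic_or_nonempty_mulEquiv_dihedralGroup_zero [Infinite G] (C : Subgroup G)
    [IsCyclic C] [C.FiniteIndex]
    (hcomm : ∀ t g : G, IsOfFinOrder t → t ≠ 1 → Commute t g → IsOfFinOrder g) :
    IsCyclic G ∨ Nonempty (G ≃* DihedralGroup 0) := by
  obtain ⟨z, hz, _, _⟩ := exists_normal_zpowers_finiteIndex C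
  have hzK : zpowers z ≤ centralizer {z} := by rw [zpowers_le, mem_centralizer_singleton_iff]
  have : (centralizer {z}).Normal := by
    rw [← centralizer_closure, ← zpowers_eq_closure]; infer_instance
  have hK : IsCyclic (centralizer {z}) := isCyclic_centralizer_of_finiteIndex fun g hg hgfin => by
    by_contra hg1
    exact hz (hcomm g z hgfin hg1 (mem_centralizer_singleton_iff.1 hg))
  obtain ⟨u, hu⟩ := ((centralizer {z}).isCyclic_iff_exists_zpowers_eq_top).1 hK
  by_cases hKG : ∀ g, g ∈ centralizer {z}
  · exact .inl (isCyclic_iff_exists_zpowers_eq_top.2 ⟨u, hu.trans ((eq_top_iff' _).2 hKG)⟩)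
  obtain ⟨s, hs⟩ := not_forall.1 hKG
  have hinv (g : G) (hg : g ∉ centralizer {z}) : g * z * g⁻¹ = z⁻¹ :=
    (conj_eq_or_eq_inv_of_normal_zpowers hz g).resolve_left fun h =>
      hg (mem_centralizer_singleton_iff.2 (mul_inv_eq_iff_eq_mul.1 h))
  obtain ⟨m, hm⟩ := mem_zpowers_iff.1 (hu ▸ hzK (mem_zpowers z))
  have hu' : ¬ IsOfFinOrder u := fun h => hz (hm ▸ h.zpow)
  have : (zpowers u).Normal := hu ▸ inferInstance
  refine .inr (nonempty_mulEquiv_dihedralGroup_zero_of_conj_eq_inv hu' (hu ▸ hs) ?_ fun g hg => ?_)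
  · refine (conj_eq_or_eq_inv_of_normal_zpowers hu' s).resolve_left fun h => hs ?_
    rw [mem_centralizer_singleton_iff, ← hm]
    exact (Commute.zpow_right (mul_inv_eq_iff_eq_mul.1 h) m).eq
  · rw [hu] at hg ⊢
    rw [mem_centralizer_singleton_iff]
    calc s * g * z = s * (g * z * g⁻¹) * s⁻¹ * (s * g) := by group
      _ = (s * z * s⁻¹)⁻¹ * (s * g) := by rw [hinv g hg]; group
      _ = z * (s * g) := by rw [hinv s hs, inv_inv]

end VirtuallyCyclic

section ModularGroup

local notation "Γ" => Multiplicative (ZMod 2) ∗ Multiplicative (ZMod 3)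

-- `cond b 2 3` inside `ZMod`, rather than `cond b (ZMod 2) (ZMod 3)`, so that the group
-- instances of the factors are found by unification.
abbrev ModularGroupFactor (b : Bool) : Type := Multiplicative (ZMod (cond b 2 3))

def modularGroupEquiv : Γ ≃* CoprodI ModularGroupFactor :=
  (CoprodI.mulEquivCoprodBool ModularGroupFactor).symm

theorem modularGroup_isCyclic_of_finite (H : Subgroup Γ) [Finite H] : IsCyclic H := by
  let φ := Coprod.lift (MonoidHom.inl (Multiplicative (ZMod 2)) (Multiplicative (ZMod 3)))
    (MonoidHom.inr _ _)
  have : IsCyclic (Multiplicative (ZMod 2) × Multiplicative (ZMod 3)) :=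
    Group.isCyclic_prod_iff.2 ⟨inferInstance, inferInstance, by norm_num⟩
  refine isCyclic_of_injective (φ.comp H.subtype) ((injective_iff_map_eq_one _).2 fun h hh => ?_)
  have := CoprodI.eq_one_of_isOfFinOrder_of_map_eq_one (φ.comp modularGroupEquiv.symm.toMonoidHom)
    (fun
      | true => fun a b hab => congrArg Prod.fst hab
      | false => fun a b hab => congrArg Prod.snd hab)
    (modularGroupEquiv.toMonoidHom.isOfFinOrder (H.subtype.isOfFinOrder (isOfFinOrder_of_finite h)))
    (by simpa using hh)
  simpa using this

theorem modularGroup_isOfFinOrder_of_commute {t x : Γ} (ht : IsOfFinOrder t) (ht1 : t ≠ 1)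
    (h : Commute t x) : IsOfFinOrder x := by
  have := CoprodI.isOfFinOrder_of_commute
    (fun
      | true => isMulTorsion_of_finite (G := Multiplicative (ZMod 2))
      | false => isMulTorsion_of_finite (G := Multiplicative (ZMod 3)))
    (modularGroupEquiv.toMonoidHom.isOfFinOrder ht) (by simpa using ht1) (h.map modularGroupEquiv)
  simpa using modularGroupEquiv.symm.toMonoidHom.isOfFinOrder this

end ModularGroup

/-- Every virtually cyclic subgroup of `Γ = ℤ/2 * ℤ/3 ≅ PSL₂(ℤ)` is either cyclic
or infinite dihedral (`DihedralGroup 0` is the infinite dihedral group). -/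
theorem stmt17
    (H : Subgroup (Monoid.Coprod (Multiplicative (ZMod 2)) (Multiplicative (ZMod 3))))
    (hvc : ∃ C : Subgroup H, IsCyclic C ∧ C.index ≠ 0) :
    IsCyclic H ∨ Nonempty (H ≃* DihedralGroup 0) := by
  obtain ⟨C, hC, hCi⟩ := hvc
  rcases finite_or_infinite H with hH | hH
  · exact .inl (modularGroup_isCyclic_of_finite H)
  · have : C.FiniteIndex := ⟨hCi⟩
    refine isCyclic_or_nonempty_mulEquiv_dihedralGroup_zero C
      fun t x ht ht1 h => Submonoid.isOfFinOrder_coe.1 ?_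
    exact modularGroup_isOfFinOrder_of_commute (Submonoid.isOfFinOrder_coe.2 ht)
      (by simpa using ht1) (h.map H.subtype)
end
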